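/- arXiv:2508.03985 — 7 statements merged into one kernel-verified Lean document; each statement's English description precedes it below -/
import Mathlib

section
/- Let μ, ν be Borel probability measures whose supports each have diameter at most L. Then for p, q ∈ [1, ∞), the (p,q)-Gromov-Wasserstein distance satisfies GW_{p,q}(μ, ν) ≤ q L^{q-1} GW_{p,1}(μ, ν). -/
open MeasureTheory

/-- The `(p,q)`-Gromov-Wasserstein distance between `μ` on `ℝ^{d_x}` and `ν` on `ℝ^{d_y}`:
`GW_{p,q}(μ,ν) = (inf_{π ∈ Π(μ,ν)} ∬ |‖x-x'‖^q - ‖y-y'‖^q|^p dπ dπ)^{1/p}`. -/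
noncomputable def GW (dx dy : ℕ) (p q : ℝ)
    (μ : Measure (EuclideanSpace ℝ (Fin dx))) (ν : Measure (EuclideanSpace ℝ (Fin dy))) : ℝ :=
  (⨅ π : {π : Measure (EuclideanSpace ℝ (Fin dx) × EuclideanSpace ℝ (Fin dy)) //
      π.fst = μ ∧ π.snd = ν},
    ∫ w, ∫ w', |‖w.1 - w'.1‖ ^ q - ‖w.2 - w'.2‖ ^ q| ^ p ∂π.1 ∂π.1) ^ (1 / p)

/-- Mean value bound: for `a, b ∈ [0, L]` and `q ≥ 1`,
`|a^q - b^q| ≤ q L^(q-1) |a - b|`. -/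
lemma abs_rpow_sub_rpow_le {q L : ℝ} (hq : 1 ≤ q) {a b : ℝ}
    (ha : a ∈ Set.Icc 0 L) (hb : b ∈ Set.Icc 0 L) :
    |a ^ q - b ^ q| ≤ q * L ^ (q - 1) * |a - b| := by
  have hderiv : ∀ x ∈ Set.Icc (0:ℝ) L,
      HasDerivWithinAt (fun u : ℝ => u ^ q) (q * x ^ (q - 1)) (Set.Icc 0 L) x :=
    fun x _ => (Real.hasDerivAt_rpow_const (Or.inr hq)).hasDerivWithinAt
  have hbound : ∀ x ∈ Set.Icc (0:ℝ) L, ‖q * x ^ (q - 1)‖ ≤ q * L ^ (q - 1) := by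
    intro x hx
    rw [Real.norm_eq_abs, abs_of_nonneg (mul_nonneg (by linarith) (Real.rpow_nonneg hx.1 _))]
    exact mul_le_mul_of_nonneg_left
      (Real.rpow_le_rpow hx.1 hx.2 (by linarith)) (by linarith)
  have := (convex_Icc (0:ℝ) L).norm_image_sub_le_of_norm_hasDerivWithin_le
    hderiv hbound hb ha
  simpa [Real.norm_eq_abs] using this

/-- If the supports of `μ` and `ν` each have diameter at most `L`, then
`GW_{p,q}(μ,ν) ≤ q L^{q-1} GW_{p,1}(μ,ν)` for `p, q ∈ [1,∞)`. -/
theorem stmt_1 (dx dy : ℕ) (p q L : ℝ) (hp : 1 ≤ p) (hq : 1 ≤ q) (hL : 0 < L)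
    (μ : Measure (EuclideanSpace ℝ (Fin dx))) (ν : Measure (EuclideanSpace ℝ (Fin dy)))
    [IsProbabilityMeasure μ] [IsProbabilityMeasure ν]
    (hμ : ∃ s : Set (EuclideanSpace ℝ (Fin dx)), μ sᶜ = 0 ∧ EMetric.diam s ≤ ENNReal.ofReal L)
    (hν : ∃ s : Set (EuclideanSpace ℝ (Fin dy)), ν sᶜ = 0 ∧ EMetric.diam s ≤ ENNReal.ofReal L) :
    GW dx dy p q μ ν ≤ q * L ^ (q - 1) * GW dx dy p 1 μ ν := by
  obtain ⟨s, hs0, hsd⟩ := hμ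
  obtain ⟨t, ht0, htd⟩ := hν
  have hp0 : (0:ℝ) < p := lt_of_lt_of_le one_pos hp
  set c : ℝ := q * L ^ (q - 1) with hcdef
  have hc0 : 0 ≤ c := mul_nonneg (by linarith) (Real.rpow_nonneg hL.le _)
  set cp : ℝ := c ^ p with hcpdef
  have hcp0 : 0 ≤ cp := Real.rpow_nonneg hc0 _
  rw [GW, GW]
  set Iq : {π : Measure (EuclideanSpace ℝ (Fin dx) × EuclideanSpace ℝ (Fin dy)) //
      π.fst = μ ∧ π.snd = ν} → ℝ := fun π =>
    ∫ w, ∫ w', |‖w.1 - w'.1‖ ^ q - ‖w.2 - w'.2‖ ^ q| ^ p ∂π.1 ∂π.1 with hIq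
  set I1 : {π : Measure (EuclideanSpace ℝ (Fin dx) × EuclideanSpace ℝ (Fin dy)) //
      π.fst = μ ∧ π.snd = ν} → ℝ := fun π =>
    ∫ w, ∫ w', |‖w.1 - w'.1‖ ^ (1:ℝ) - ‖w.2 - w'.2‖ ^ (1:ℝ)| ^ p ∂π.1 ∂π.1 with hI1
  have hne : Nonempty {π : Measure (EuclideanSpace ℝ (Fin dx) × EuclideanSpace ℝ (Fin dy)) //
      π.fst = μ ∧ π.snd = ν} := ⟨⟨μ.prod ν, Measure.fst_prod, Measure.snd_prod⟩⟩
  have hIq_nonneg : ∀ π, 0 ≤ Iq π := fun π =>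
    integral_nonneg fun w => integral_nonneg fun w' => Real.rpow_nonneg (abs_nonneg _) _
  have hI1_nonneg : ∀ π, 0 ≤ I1 π := fun π =>
    integral_nonneg fun w => integral_nonneg fun w' => Real.rpow_nonneg (abs_nonneg _) _
  -- core inequality for each coupling
  have core : ∀ π, Iq π ≤ cp * I1 π := by
    rintro ⟨π, hπ1, hπ2⟩
    haveI hbsp : BorelSpace (EuclideanSpace ℝ (Fin dx) × EuclideanSpace ℝ (Fin dy)) := by
      infer_instance
    haveI homs : OpensMeasurableSpace
        ((EuclideanSpace ℝ (Fin dx) × EuclideanSpace ℝ (Fin dy)) ×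
          (EuclideanSpace ℝ (Fin dx) × EuclideanSpace ℝ (Fin dy))) :=
      Prod.opensMeasurableSpace
    haveI : IsProbabilityMeasure π := by
      constructor
      rw [← Set.preimage_univ (f := @Prod.fst (EuclideanSpace ℝ (Fin dx))
        (EuclideanSpace ℝ (Fin dy))), ← Measure.fst_apply MeasurableSet.univ, hπ1, measure_univ]
    -- a.e. membership in s × t
    have haes : ∀ᵐ w ∂π, w.1 ∈ s ∧ w.2 ∈ t := by
      have h1 : π (Prod.fst ⁻¹' sᶜ) = 0 :=
        le_antisymm (by
          calc π (Prod.fst ⁻¹' sᶜ) ≤ π.fst sᶜ :=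
                Measure.le_map_apply measurable_fst.aemeasurable _
            _ = 0 := by rw [hπ1, hs0]) zero_le
      have h2 : π (Prod.snd ⁻¹' tᶜ) = 0 :=
        le_antisymm (by
          calc π (Prod.snd ⁻¹' tᶜ) ≤ π.snd tᶜ :=
                Measure.le_map_apply measurable_snd.aemeasurable _
            _ = 0 := by rw [hπ2, ht0]) zero_le
      have h3 : π ((Prod.fst ⁻¹' sᶜ) ∪ (Prod.snd ⁻¹' tᶜ)) = 0 := measure_union_null h1 h2
      rw [MeasureTheory.ae_iff]
      refine measure_mono_null (fun w hw => ?_) h3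
      simp only [Set.mem_setOf_eq, not_and_or] at hw
      exact hw.imp (fun h => h) (fun h => h)
    -- distances bounded by L on s and t
    have hds : ∀ x ∈ s, ∀ x' ∈ s, ‖x - x'‖ ≤ L := by
      intro x hx x' hx'
      rw [← dist_eq_norm]
      exact (edist_le_ofReal hL.le).mp ((EMetric.edist_le_diam_of_mem hx hx').trans hsd)
    have hdt : ∀ y ∈ t, ∀ y' ∈ t, ‖y - y'‖ ≤ L := by
      intro y hy y' hy'
      rw [← dist_eq_norm]
      exact (edist_le_ofReal hL.le).mp ((EMetric.edist_le_diam_of_mem hy hy').trans htd)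
    -- pointwise inequality on (s × t) × (s × t)
    have hpt : ∀ w w' : EuclideanSpace ℝ (Fin dx) × EuclideanSpace ℝ (Fin dy),
        w.1 ∈ s ∧ w.2 ∈ t → w'.1 ∈ s ∧ w'.2 ∈ t →
        |‖w.1 - w'.1‖ ^ q - ‖w.2 - w'.2‖ ^ q| ^ p ≤
          cp * |‖w.1 - w'.1‖ ^ (1:ℝ) - ‖w.2 - w'.2‖ ^ (1:ℝ)| ^ p := by
      intro w w' hw hw'
      have h1 : ‖w.1 - w'.1‖ ∈ Set.Icc (0:ℝ) L := ⟨norm_nonneg _, hds _ hw.1 _ hw'.1⟩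
      have h2 : ‖w.2 - w'.2‖ ∈ Set.Icc (0:ℝ) L := ⟨norm_nonneg _, hdt _ hw.2 _ hw'.2⟩
      have key := abs_rpow_sub_rpow_le hq h1 h2
      calc |‖w.1 - w'.1‖ ^ q - ‖w.2 - w'.2‖ ^ q| ^ p
          ≤ (c * |‖w.1 - w'.1‖ - ‖w.2 - w'.2‖|) ^ p :=
            Real.rpow_le_rpow (abs_nonneg _) key hp0.le
        _ = cp * |‖w.1 - w'.1‖ ^ (1:ℝ) - ‖w.2 - w'.2‖ ^ (1:ℝ)| ^ p := by
            rw [Real.mul_rpow hc0 (abs_nonneg _), Real.rpow_one, Real.rpow_one]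
    -- and the pointwise L^p bound
    have hbd1 : ∀ w w' : EuclideanSpace ℝ (Fin dx) × EuclideanSpace ℝ (Fin dy),
        w.1 ∈ s ∧ w.2 ∈ t → w'.1 ∈ s ∧ w'.2 ∈ t →
        |‖w.1 - w'.1‖ ^ (1:ℝ) - ‖w.2 - w'.2‖ ^ (1:ℝ)| ^ p ≤ L ^ p := by
      intro w w' hw hw'
      refine Real.rpow_le_rpow (abs_nonneg _) ?_ hp0.le
      rw [Real.rpow_one, Real.rpow_one, abs_sub_le_iff]
      constructor
      · have := hds _ hw.1 _ hw'.1
        have := norm_nonneg (w.2 - w'.2); linarith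
      · have := hdt _ hw.2 _ hw'.2
        have := norm_nonneg (w.1 - w'.1); linarith
    -- continuity / measurability of the integrands
    have hcontq : ∀ r : ℝ, 0 ≤ r → Continuous fun w :
        (EuclideanSpace ℝ (Fin dx) × EuclideanSpace ℝ (Fin dy)) ×
          (EuclideanSpace ℝ (Fin dx) × EuclideanSpace ℝ (Fin dy)) =>
        |‖w.1.1 - w.2.1‖ ^ r - ‖w.1.2 - w.2.2‖ ^ r| ^ p := by
      intro r hr
      have c1 : Continuous fun w :
          (EuclideanSpace ℝ (Fin dx) × EuclideanSpace ℝ (Fin dy)) ×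
            (EuclideanSpace ℝ (Fin dx) × EuclideanSpace ℝ (Fin dy)) =>
          ‖w.1.1 - w.2.1‖ ^ r :=
        (continuous_fst.fst.sub continuous_snd.fst).norm.rpow_const fun _ => Or.inr hr
      have c2 : Continuous fun w :
          (EuclideanSpace ℝ (Fin dx) × EuclideanSpace ℝ (Fin dy)) ×
            (EuclideanSpace ℝ (Fin dx) × EuclideanSpace ℝ (Fin dy)) =>
          ‖w.1.2 - w.2.2‖ ^ r :=
        (continuous_fst.snd.sub continuous_snd.snd).norm.rpow_const fun _ => Or.inr hr
      exact ((c1.sub c2).abs).rpow_const fun _ => Or.inr hp0.le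
    have hsm1 : StronglyMeasurable fun w : EuclideanSpace ℝ (Fin dx) × EuclideanSpace ℝ (Fin dy) =>
        ∫ w', |‖w.1 - w'.1‖ ^ (1:ℝ) - ‖w.2 - w'.2‖ ^ (1:ℝ)| ^ p ∂π :=
      ((hcontq 1 (by norm_num)).stronglyMeasurable).integral_prod_right'
    -- inner integral comparison, a.e. in w
    have hinner : ∀ᵐ w ∂π,
        (∫ w', |‖w.1 - w'.1‖ ^ q - ‖w.2 - w'.2‖ ^ q| ^ p ∂π) ≤
          cp * ∫ w', |‖w.1 - w'.1‖ ^ (1:ℝ) - ‖w.2 - w'.2‖ ^ (1:ℝ)| ^ p ∂π := by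
      filter_upwards [haes] with w hw
      rw [← integral_const_mul]
      refine integral_mono_of_nonneg ?_ ?_ ?_
      · exact Filter.Eventually.of_forall fun w' => Real.rpow_nonneg (abs_nonneg _) _
      · refine Integrable.mono' (integrable_const (cp * L ^ p)) ?_ ?_
        · exact Continuous.aestronglyMeasurable (by
            have := (hcontq 1 (by norm_num)).comp
              (Continuous.prodMk (continuous_const (y := w)) continuous_id)
            exact continuous_const.mul this)
        · filter_upwards [haes] with w' hw'
          rw [Real.norm_eq_abs, abs_of_nonneg
            (mul_nonneg hcp0 (Real.rpow_nonneg (abs_nonneg _) _))]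
          exact mul_le_mul_of_nonneg_left (hbd1 w w' hw hw') hcp0
      · filter_upwards [haes] with w' hw'
        exact hpt w w' hw hw'
    -- integrate
    refine le_trans (integral_mono_of_nonneg
      (Filter.Eventually.of_forall fun w =>
        integral_nonneg fun w' => Real.rpow_nonneg (abs_nonneg _) _)
      ?_ hinner) ?_
    · refine Integrable.mono' (integrable_const (cp * L ^ p)) ?_ ?_
      · exact (stronglyMeasurable_const.mul hsm1).aestronglyMeasurable
      · filter_upwards [haes] with w hw
        rw [Real.norm_eq_abs, abs_of_nonneg (mul_nonneg hcp0
          (integral_nonneg fun w' => Real.rpow_nonneg (abs_nonneg _) _))]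
        refine mul_le_mul_of_nonneg_left ?_ hcp0
        calc (∫ w', |‖w.1 - w'.1‖ ^ (1:ℝ) - ‖w.2 - w'.2‖ ^ (1:ℝ)| ^ p ∂π)
            ≤ ∫ _, L ^ p ∂π := by
              refine integral_mono_of_nonneg
                (Filter.Eventually.of_forall fun w' => Real.rpow_nonneg (abs_nonneg _) _)
                (integrable_const _) ?_
              filter_upwards [haes] with w' hw'
              exact hbd1 w w' hw hw'
          _ = L ^ p := by simp
    · rw [integral_const_mul]
  -- conclude via infima
  have hA0 : 0 ≤ ⨅ π, Iq π := Real.iInf_nonneg hIq_nonneg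
  have hB0 : 0 ≤ ⨅ π, I1 π := Real.iInf_nonneg hI1_nonneg
  have hstep : (⨅ π, Iq π) ≤ cp * ⨅ π, I1 π := by
    rw [Real.mul_iInf_of_nonneg hcp0]
    refine le_ciInf fun π => ?_
    exact le_trans (ciInf_le ⟨0, by rintro _ ⟨π', rfl⟩; exact hIq_nonneg π'⟩ π) (core π)
  calc (⨅ π, Iq π) ^ (1/p) ≤ (cp * ⨅ π, I1 π) ^ (1/p) :=
        Real.rpow_le_rpow hA0 hstep (by positivity)
    _ = cp ^ (1/p) * (⨅ π, I1 π) ^ (1/p) := Real.mul_rpow hcp0 hB0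
    _ = c * (⨅ π, I1 π) ^ (1/p) := by
        rw [hcpdef, ← Real.rpow_mul hc0, mul_one_div, div_self hp0.ne', Real.rpow_one]
end

section
/- Let μ ∈ P_4(ℝ^{d_x}) and ν ∈ P_4(ℝ^{d_y}). Define S_2(μ,ν) = inf over couplings π of { ∫ -4||x||^2||y||^2 dπ - 8 || ∫ x y^⊤ dπ ||_F^2 }. Then S_2(μ,ν) = inf over matrices A ∈ ℝ^{d_x × d_y} of { 32||A||_F^2 + T_{c_A}(μ,ν) }, where c_A(x,y) = -4||x||^2||y||^2 - 32 x^⊤ A y and T_{c_A} is the optimal transport cost with cost c_A. Moreover, the infimum over A is achieved by some A with ||A||_op ≤ sqrt(m_2(μ) m_2(ν))/2. -/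
open MeasureTheory
open scoped BigOperators

/-- Operator norm of a (rectangular) real matrix, viewed as a linear map between
Euclidean spaces. -/
noncomputable def matOpNorm {dx dy : ℕ} (A : Matrix (Fin dx) (Fin dy) ℝ) : ℝ :=
  ⨆ v : {v : EuclideanSpace ℝ (Fin dy) // ‖v‖ ≤ 1}, ‖Matrix.toEuclideanLin A v.1‖

/-- Squared Frobenius norm of a matrix. -/
noncomputable def frobSq {dx dy : ℕ} (A : Matrix (Fin dx) (Fin dy) ℝ) : ℝ :=
  ∑ i, ∑ j, A i j ^ 2

/-- The optimal transport cost `T_c(μ,ν) = inf_{π ∈ Π(μ,ν)} ∫ c dπ`. -/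
noncomputable def OTcost {X Y : Type*} [MeasurableSpace X] [MeasurableSpace Y]
    (c : X × Y → ℝ) (μ : Measure X) (ν : Measure Y) : ℝ :=
  ⨅ π : {π : Measure (X × Y) // π.fst = μ ∧ π.snd = ν}, ∫ z, c z ∂π.1

/-- The cost `c_A(x,y) = -4‖x‖²‖y‖² - 32 xᵀAy`. -/
noncomputable def cCost {dx dy : ℕ} (A : Matrix (Fin dx) (Fin dy) ℝ)
    (z : EuclideanSpace ℝ (Fin dx) × EuclideanSpace ℝ (Fin dy)) : ℝ :=
  -4 * ‖z.1‖ ^ 2 * ‖z.2‖ ^ 2 - 32 * ∑ i, ∑ j, z.1 i * A i j * z.2 j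

/-- `S₂(μ,ν) = inf_{π ∈ Π(μ,ν)} { ∫ -4‖x‖²‖y‖² dπ - 8 ‖∫ x yᵀ dπ‖_F² }`. -/
noncomputable def S2 {dx dy : ℕ}
    (μ : Measure (EuclideanSpace ℝ (Fin dx))) (ν : Measure (EuclideanSpace ℝ (Fin dy))) : ℝ :=
  ⨅ π : {π : Measure (EuclideanSpace ℝ (Fin dx) × EuclideanSpace ℝ (Fin dy)) //
      π.fst = μ ∧ π.snd = ν},
    (∫ z, -4 * ‖z.1‖ ^ 2 * ‖z.2‖ ^ 2 ∂π.1)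
      - 8 * frobSq (Matrix.of fun i j => ∫ z, z.1 i * z.2 j ∂π.1)

set_option linter.unusedSectionVars false

open Finset
open scoped RealInnerProductSpace

namespace S4



lemma le_of_sq_le_sq {x y : ℝ} (h : x^2 ≤ y^2) (hy : 0 ≤ y) : x ≤ y := by
  by_contra h'
  push_neg at h'
  nlinarith

lemma ciInf_sub_const {ι : Sort*} [Nonempty ι] {f : ι → ℝ} (h : BddBelow (Set.range f))
    (c : ℝ) : (⨅ i, (f i - c)) = (⨅ i, f i) - c := by
  have hb : BddBelow (Set.range fun i => f i - c) := by
    obtain ⟨b, hbb⟩ := h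
    exact ⟨b - c, by rintro x ⟨i, rfl⟩; have := hbb ⟨i, rfl⟩; simp only [Set.mem_setOf_eq] at this ⊢; linarith⟩
  apply le_antisymm
  · have : ∀ i, (⨅ j, (f j - c)) + c ≤ f i := fun i => by
      have := ciInf_le hb i; linarith
    have := le_ciInf this
    linarith
  · apply le_ciInf fun i => ?_
    have := ciInf_le h i
    linarith

lemma norm_sq_eucl {ι : Type*} [Fintype ι] (a : EuclideanSpace ℝ ι) :
    ‖a‖^2 = ∑ i, (a i)^2 := by
  rw [EuclideanSpace.norm_eq, Real.sq_sqrt (by positivity)]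
  simp [Real.norm_eq_abs, sq_abs]

lemma inner_eucl {ι : Type*} [Fintype ι] (a b : EuclideanSpace ℝ ι) :
    ⟪a, b⟫ = ∑ i, a i * b i := by
  simp [PiLp.inner_apply, RCLike.inner_apply, conj_trivial]
  exact Finset.sum_congr rfl fun _ _ => mul_comm _ _

lemma abs_apply_le {ι : Type*} [Fintype ι] (a : EuclideanSpace ℝ ι) (i : ι) :
    |a i| ≤ ‖a‖ := by
  rw [EuclideanSpace.norm_eq, ← Real.sqrt_sq_eq_abs]
  apply Real.sqrt_le_sqrt
  have : (a i)^2 ≤ ∑ j, ‖a j‖^2 := by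
    have := Finset.single_le_sum (f := fun j => ‖a j‖^2) (fun j _ => by positivity)
      (Finset.mem_univ i)
    simpa [Real.norm_eq_abs, sq_abs] using this
  exact this

lemma contract {E : Type*} [NormedAddCommGroup E] [InnerProductSpace ℝ E]
    (a c : E) {r : ℝ} (hr : 0 ≤ r) (hc : ‖c‖ ≤ r) (ha : r ≤ ‖a‖) :
    ‖(r / ‖a‖) • a - c‖ ≤ ‖a - c‖ := by
  by_cases h0 : a = 0
  · simp [h0]
  have hapos : 0 < ‖a‖ := norm_pos_iff.mpr h0
  set t := r / ‖a‖ with htdef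
  have ht0 : 0 ≤ t := div_nonneg hr hapos.le
  have ht1 : t ≤ 1 := (div_le_one hapos).mpr ha
  have htr : t * ‖a‖ = r := div_mul_cancel₀ _ hapos.ne'
  have hic : ⟪a, c⟫ ≤ ‖a‖ * r :=
    (real_inner_le_norm a c).trans (mul_le_mul_of_nonneg_left hc (norm_nonneg a))
  apply le_of_sq_le_sq _ (norm_nonneg _)
  rw [norm_sub_sq_real, norm_sub_sq_real, real_inner_smul_left, norm_smul,
    Real.norm_eq_abs, abs_of_nonneg ht0, mul_pow]
  nlinarith [sq_nonneg (1 - t), sq_nonneg ‖a‖, norm_nonneg a]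

lemma norm_sq_sub_norm_sq_le {E : Type*} [NormedAddCommGroup E] (u w : E) :
    ‖u‖^2 - ‖w‖^2 ≤ ‖u - w‖ * (‖u‖ + ‖w‖) := by
  nlinarith [norm_sub_norm_le u w, norm_nonneg u, norm_nonneg w, norm_nonneg (u - w)]




variable {dx dy : ℕ}

abbrev Cpl (μ : Measure (EuclideanSpace ℝ (Fin dx))) (ν : Measure (EuclideanSpace ℝ (Fin dy))) :=
  {π : Measure (EuclideanSpace ℝ (Fin dx) × EuclideanSpace ℝ (Fin dy)) //
    π.fst = μ ∧ π.snd = ν}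

variable {μ : Measure (EuclideanSpace ℝ (Fin dx))} {ν : Measure (EuclideanSpace ℝ (Fin dy))}

instance cpl_nonempty [IsProbabilityMeasure μ] [IsProbabilityMeasure ν] :
    Nonempty (Cpl μ ν) :=
  ⟨⟨μ.prod ν, Measure.fst_prod, Measure.snd_prod⟩⟩

lemma cpl_prob [IsProbabilityMeasure μ] (π : Cpl μ ν) : IsProbabilityMeasure π.1 :=
  ⟨by rw [← Measure.fst_univ, π.2.1]; exact measure_univ⟩

lemma map_fst (π : Cpl μ ν) : π.1.map Prod.fst = μ := π.2.1
lemma map_snd (π : Cpl μ ν) : π.1.map Prod.snd = ν := π.2.2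

lemma integral_fst_eq {g : EuclideanSpace ℝ (Fin dx) → ℝ} (hg : Continuous g)
    (π : Cpl μ ν) : ∫ z, g z.1 ∂π.1 = ∫ x, g x ∂μ := by
  have h := integral_map (μ := π.1) measurable_fst.aemeasurable hg.aestronglyMeasurable
  rw [map_fst π] at h
  exact h.symm

lemma integral_snd_eq {g : EuclideanSpace ℝ (Fin dy) → ℝ} (hg : Continuous g)
    (π : Cpl μ ν) : ∫ z, g z.2 ∂π.1 = ∫ y, g y ∂ν := by
  have h := integral_map (μ := π.1) measurable_snd.aemeasurable hg.aestronglyMeasurable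
  rw [map_snd π] at h
  exact h.symm

lemma integrable_mono' {α : Type*} [MeasurableSpace α] {m : Measure α} {f g : α → ℝ}
    (hg : Integrable g m) (hf : AEStronglyMeasurable f m) (h : ∀ x, |f x| ≤ g x) :
    Integrable f m :=
  hg.mono hf (ae_of_all _ fun x => by
    rw [Real.norm_eq_abs, Real.norm_eq_abs]; exact (h x).trans (le_abs_self _))

lemma int_fst_of_int {g : EuclideanSpace ℝ (Fin dx) → ℝ} (hg : Continuous g)
    (hgi : Integrable g μ) (π : Cpl μ ν) : Integrable (fun z => g z.1) π.1 := by
  have h := (integrable_map_measure hg.aestronglyMeasurable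
    measurable_fst.aemeasurable (μ := π.1)).mp (by rw [map_fst π]; exact hgi)
  exact h

lemma int_snd_of_int {g : EuclideanSpace ℝ (Fin dy) → ℝ} (hg : Continuous g)
    (hgi : Integrable g ν) (π : Cpl μ ν) : Integrable (fun z => g z.2) π.1 := by
  have h := (integrable_map_measure hg.aestronglyMeasurable
    measurable_snd.aemeasurable (μ := π.1)).mp (by rw [map_snd π]; exact hgi)
  exact h

section moments
variable [IsProbabilityMeasure μ] [IsProbabilityMeasure ν]

lemma int_x4 (hμ : Integrable (fun x => ‖x‖ ^ 4) μ) (π : Cpl μ ν) :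
    Integrable (fun z => ‖z.1‖^4) π.1 :=
  int_fst_of_int (continuous_norm.pow 4) hμ π

lemma int_y4 (hν : Integrable (fun y => ‖y‖ ^ 4) ν) (π : Cpl μ ν) :
    Integrable (fun z => ‖z.2‖^4) π.1 :=
  int_snd_of_int (continuous_norm.pow 4) hν π

lemma int_x2 (hμ : Integrable (fun x => ‖x‖ ^ 4) μ) (π : Cpl μ ν) :
    Integrable (fun z => ‖z.1‖^2) π.1 := by
  haveI := cpl_prob π
  refine integrable_mono' ((integrable_const 1).add (int_x4 hμ π))
    ((continuous_fst.norm.pow 2).aestronglyMeasurable) fun z => ?_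
  simp only [Pi.add_apply]
  have h : (0:ℝ) ≤ ‖z.1‖ := norm_nonneg _
  rw [abs_of_nonneg (by positivity)]
  nlinarith [sq_nonneg (‖z.1‖^2 - 1)]

lemma int_y2 (hν : Integrable (fun y => ‖y‖ ^ 4) ν) (π : Cpl μ ν) :
    Integrable (fun z => ‖z.2‖^2) π.1 := by
  haveI := cpl_prob π
  refine integrable_mono' ((integrable_const 1).add (int_y4 hν π))
    ((continuous_snd.norm.pow 2).aestronglyMeasurable) fun z => ?_
  simp only [Pi.add_apply]
  have h : (0:ℝ) ≤ ‖z.2‖ := norm_nonneg _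
  rw [abs_of_nonneg (by positivity)]
  nlinarith [sq_nonneg (‖z.2‖^2 - 1)]

lemma int_x2y2 (hμ : Integrable (fun x => ‖x‖ ^ 4) μ) (hν : Integrable (fun y => ‖y‖ ^ 4) ν)
    (π : Cpl μ ν) : Integrable (fun z => ‖z.1‖^2 * ‖z.2‖^2) π.1 := by
  refine integrable_mono' ((int_x4 hμ π).add (int_y4 hν π))
    (((continuous_fst.norm.pow 2).mul (continuous_snd.norm.pow 2)).aestronglyMeasurable)
    fun z => ?_
  simp only [Pi.add_apply]
  rw [abs_of_nonneg (by positivity)]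
  nlinarith [sq_nonneg (‖z.1‖^2 - ‖z.2‖^2)]

lemma int_xynorm (hμ : Integrable (fun x => ‖x‖ ^ 4) μ) (hν : Integrable (fun y => ‖y‖ ^ 4) ν)
    (π : Cpl μ ν) : Integrable (fun z => ‖z.1‖ * ‖z.2‖) π.1 := by
  refine integrable_mono' ((int_x2 hμ π).add (int_y2 hν π))
    ((continuous_fst.norm.mul continuous_snd.norm).aestronglyMeasurable) fun z => ?_
  simp only [Pi.add_apply]
  rw [abs_of_nonneg (by positivity)]
  nlinarith [sq_nonneg (‖z.1‖ - ‖z.2‖), norm_nonneg z.1, norm_nonneg z.2]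

lemma cont_coord_x (i : Fin dx) :
    Continuous (fun z : EuclideanSpace ℝ (Fin dx) × EuclideanSpace ℝ (Fin dy) => z.1 i) :=
  (EuclideanSpace.proj (𝕜 := ℝ) i).continuous.comp continuous_fst

lemma cont_coord_y (j : Fin dy) :
    Continuous (fun z : EuclideanSpace ℝ (Fin dx) × EuclideanSpace ℝ (Fin dy) => z.2 j) :=
  (EuclideanSpace.proj (𝕜 := ℝ) j).continuous.comp continuous_snd

lemma int_xy (hμ : Integrable (fun x => ‖x‖ ^ 4) μ) (hν : Integrable (fun y => ‖y‖ ^ 4) ν)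
    (π : Cpl μ ν) (i : Fin dx) (j : Fin dy) :
    Integrable (fun z => z.1 i * z.2 j) π.1 := by
  refine integrable_mono' ((int_x2 hμ π).add (int_y2 hν π))
    (((cont_coord_x i).mul (cont_coord_y j)).aestronglyMeasurable) fun z => ?_
  simp only [Pi.add_apply]
  have h1 : |z.1 i| ≤ ‖z.1‖ := abs_apply_le z.1 i
  have h2 : |z.2 j| ≤ ‖z.2‖ := abs_apply_le z.2 j
  have := abs_mul (z.1 i) (z.2 j)
  nlinarith [abs_nonneg (z.1 i), abs_nonneg (z.2 j), norm_nonneg z.1, norm_nonneg z.2,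
    sq_nonneg (‖z.1‖ - ‖z.2‖)]

end moments


noncomputable def vec (π : Cpl μ ν) : EuclideanSpace ℝ (Fin dx × Fin dy) :=
  WithLp.toLp 2 (fun p : Fin dx × Fin dy => ∫ z, z.1 p.1 * z.2 p.2 ∂π.1)

noncomputable def intI (π : Cpl μ ν) : ℝ := ∫ z, -4 * ‖z.1‖^2 * ‖z.2‖^2 ∂π.1

noncomputable def J (π : Cpl μ ν) : ℝ := intI π - 8 * ‖vec π‖^2

def toES (A : Matrix (Fin dx) (Fin dy) ℝ) : EuclideanSpace ℝ (Fin dx × Fin dy) :=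
  WithLp.toLp 2 (fun p : Fin dx × Fin dy => A p.1 p.2)

def toMat (a : EuclideanSpace ℝ (Fin dx × Fin dy)) : Matrix (Fin dx) (Fin dy) ℝ :=
  Matrix.of fun i j => a (i, j)

lemma toMat_toES (A : Matrix (Fin dx) (Fin dy) ℝ) : toMat (toES A) = A := rfl

lemma toES_toMat (a : EuclideanSpace ℝ (Fin dx × Fin dy)) : toES (toMat a) = a := by
  ext p
  cases p
  rfl

lemma frobSq_toMat (a : EuclideanSpace ℝ (Fin dx × Fin dy)) :
    frobSq (toMat a) = ‖a‖^2 := by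
  rw [norm_sq_eucl, Fintype.sum_prod_type]
  rfl

lemma frobSq_vec (π : Cpl μ ν) :
    frobSq (Matrix.of fun i j => ∫ z, z.1 i * z.2 j ∂π.1) = ‖vec π‖^2 :=
  frobSq_toMat (vec π)

section integrals
variable [IsProbabilityMeasure μ] [IsProbabilityMeasure ν]

lemma int_I (hμ : Integrable (fun x => ‖x‖ ^ 4) μ) (hν : Integrable (fun y => ‖y‖ ^ 4) ν)
    (π : Cpl μ ν) : Integrable (fun z => -4 * ‖z.1‖^2 * ‖z.2‖^2) π.1 := by
  have := (int_x2y2 hμ hν π).const_mul (-4)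
  simpa [mul_assoc] using this

lemma int_cCost (hμ : Integrable (fun x => ‖x‖ ^ 4) μ) (hν : Integrable (fun y => ‖y‖ ^ 4) ν)
    (A : Matrix (Fin dx) (Fin dy) ℝ) (π : Cpl μ ν) :
    ∫ z, cCost A z ∂π.1 = intI π - 32 * ⟪toES A, vec π⟫ := by
  have hsum : Integrable (fun z => ∑ i, ∑ j, z.1 i * A i j * z.2 j) π.1 := by
    apply integrable_finset_sum
    intro i _
    apply integrable_finset_sum
    intro j _
    have := (int_xy hμ hν π i j).const_mul (A i j)
    refine this.congr (ae_of_all _ fun z => by ring)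
  have h1 : ∫ z, cCost A z ∂π.1
      = (∫ z, -4 * ‖z.1‖^2 * ‖z.2‖^2 ∂π.1)
        - ∫ z, 32 * ∑ i, ∑ j, z.1 i * A i j * z.2 j ∂π.1 := by
    rw [← integral_sub (int_I hμ hν π) (hsum.const_mul 32)]
    rfl
  rw [h1, integral_const_mul]
  have h2 : ∫ z, ∑ i, ∑ j, z.1 i * A i j * z.2 j ∂π.1
      = ∑ i, ∑ j, A i j * vec π (i, j) := by
    rw [integral_finset_sum _ (fun i _ => by
      apply integrable_finset_sum
      intro j _
      exact ((int_xy hμ hν π i j).const_mul (A i j)).congr (ae_of_all _ fun z => by ring))]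
    refine Finset.sum_congr rfl fun i _ => ?_
    rw [integral_finset_sum _ (fun j _ =>
      ((int_xy hμ hν π i j).const_mul (A i j)).congr (ae_of_all _ fun z => by ring))]
    refine Finset.sum_congr rfl fun j _ => ?_
    have : (fun z : EuclideanSpace ℝ (Fin dx) × EuclideanSpace ℝ (Fin dy) =>
        z.1 i * A i j * z.2 j) = fun z => A i j * (z.1 i * z.2 j) := by
      funext z; ring
    rw [this, integral_const_mul]
    rfl
  rw [h2, inner_eucl, Fintype.sum_prod_type, intI]
  simp only [toES]

lemma P_le (hμ : Integrable (fun x => ‖x‖ ^ 4) μ) (hν : Integrable (fun y => ‖y‖ ^ 4) ν)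
    (π : Cpl μ ν) :
    ∫ z, ‖z.1‖ * ‖z.2‖ ∂π.1 ≤ Real.sqrt ((∫ x, ‖x‖ ^ 2 ∂μ) * ∫ y, ‖y‖ ^ 2 ∂ν) := by
  set mx := ∫ x, ‖x‖ ^ 2 ∂μ with hmxdef
  set my := ∫ y, ‖y‖ ^ 2 ∂ν with hmydef
  set P := ∫ z, ‖z.1‖ * ‖z.2‖ ∂π.1 with hPdef
  have hmx0 : 0 ≤ mx := integral_nonneg fun x => by positivity
  have hmy0 : 0 ≤ my := integral_nonneg fun y => by positivity
  have hmx' : ∫ z, ‖z.1‖^2 ∂π.1 = mx := integral_fst_eq (continuous_norm.pow 2) π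
  have hmy' : ∫ z, ‖z.2‖^2 ∂π.1 = my := integral_snd_eq (continuous_norm.pow 2) π
  have hPt : ∀ t : ℝ, 0 < t → P ≤ (t * mx + my / t) / 2 := by
    intro t ht
    have hint1 := (int_x2 hμ π).const_mul (t/2)
    have hint2 := (int_y2 hν π).const_mul (1/(2*t))
    have hmono := integral_mono (int_xynorm hμ hν π) (hint1.add hint2) (fun z => ?_)
    · simp only [Pi.add_apply] at hmono
      rw [integral_add hint1 hint2, integral_const_mul, integral_const_mul, hmx', hmy'] at hmono
      calc P ≤ t/2 * mx + 1/(2*t) * my := hmono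
        _ = (t * mx + my / t) / 2 := by field_simp
    · simp only [Pi.add_apply]
      rw [show t/2 * ‖z.1‖^2 + 1/(2*t) * ‖z.2‖^2 = (t^2*‖z.1‖^2 + ‖z.2‖^2)/(2*t) by
        field_simp, le_div_iff₀ (by positivity)]
      nlinarith [sq_nonneg (t*‖z.1‖ - ‖z.2‖)]
  by_cases hx : mx = 0
  · refine le_trans ?_ (Real.sqrt_nonneg _)
    by_cases hy : my = 0
    · have := hPt 1 one_pos
      simp [hx, hy] at this
      linarith
    · have hy' : 0 < my := lt_of_le_of_ne hmy0 (Ne.symm hy)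
      by_contra hP
      push_neg at hP
      have h1 := hPt (my / P) (by positivity)
      rw [hx] at h1
      have h2 : my / (my / P) = P := by field_simp
      rw [h2] at h1
      simp only [mul_zero, zero_add] at h1
      linarith
  · have hx' : 0 < mx := lt_of_le_of_ne hmx0 (Ne.symm hx)
    by_cases hy : my = 0
    · refine le_trans ?_ (Real.sqrt_nonneg _)
      by_contra hP
      push_neg at hP
      have h1 := hPt (P / mx) (by positivity)
      rw [hy] at h1
      have h2 : P / mx * mx = P := by field_simp
      rw [h2] at h1
      simp only [zero_div, add_zero] at h1
      linarith
    · have hy' : 0 < my := lt_of_le_of_ne hmy0 (Ne.symm hy)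
      have hsx : 0 < Real.sqrt mx := Real.sqrt_pos.mpr hx'
      have hsy : 0 < Real.sqrt my := Real.sqrt_pos.mpr hy'
      have hsx2 : Real.sqrt mx ^ 2 = mx := Real.sq_sqrt hmx0
      have hsy2 : Real.sqrt my ^ 2 = my := Real.sq_sqrt hmy0
      have h1 := hPt (Real.sqrt my / Real.sqrt mx) (div_pos hsy hsx)
      have hsqrt : Real.sqrt (mx * my) = Real.sqrt mx * Real.sqrt my := Real.sqrt_mul hmx0 _
      rw [hsqrt]
      have h2 : (Real.sqrt my / Real.sqrt mx * mx + my / (Real.sqrt my / Real.sqrt mx)) / 2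
          = Real.sqrt mx * Real.sqrt my := by
        field_simp
        nlinarith [hsx2, hsy2, hsx, hsy]
      linarith

lemma vec_norm_le (hμ : Integrable (fun x => ‖x‖ ^ 4) μ) (hν : Integrable (fun y => ‖y‖ ^ 4) ν)
    (π : Cpl μ ν) :
    ‖vec π‖ ≤ Real.sqrt ((∫ x, ‖x‖ ^ 2 ∂μ) * ∫ y, ‖y‖ ^ 2 ∂ν) := by
  have hc : ∀ z : EuclideanSpace ℝ (Fin dx) × EuclideanSpace ℝ (Fin dy),
      ∑ p : Fin dx × Fin dy, vec π p * (z.1 p.1 * z.2 p.2) ≤ ‖vec π‖ * (‖z.1‖ * ‖z.2‖) := by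
    intro z
    have hcs := Finset.sum_mul_sq_le_sq_mul_sq Finset.univ
      (fun p : Fin dx × Fin dy => vec π p) (fun p => z.1 p.1 * z.2 p.2)
    have hd : ∑ p : Fin dx × Fin dy, (z.1 p.1 * z.2 p.2)^2 = ‖z.1‖^2 * ‖z.2‖^2 := by
      rw [norm_sq_eucl, norm_sq_eucl, Finset.sum_mul_sum, Fintype.sum_prod_type]
      exact Finset.sum_congr rfl fun i _ => Finset.sum_congr rfl fun j _ => by ring
    apply le_of_sq_le_sq _ (by positivity)
    calc (∑ p : Fin dx × Fin dy, vec π p * (z.1 p.1 * z.2 p.2))^2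
        ≤ (∑ p : Fin dx × Fin dy, (vec π p)^2) * ∑ p : Fin dx × Fin dy, (z.1 p.1 * z.2 p.2)^2 :=
          hcs
      _ = ‖vec π‖^2 * (‖z.1‖^2 * ‖z.2‖^2) := by rw [← norm_sq_eucl, hd]
      _ = (‖vec π‖ * (‖z.1‖ * ‖z.2‖))^2 := by ring
  have hintsum : Integrable
      (fun z : EuclideanSpace ℝ (Fin dx) × EuclideanSpace ℝ (Fin dy) =>
        ∑ p : Fin dx × Fin dy, vec π p * (z.1 p.1 * z.2 p.2)) π.1 :=
    integrable_finset_sum _ fun p _ => (int_xy hμ hν π p.1 p.2).const_mul _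
  have h1 : ‖vec π‖^2 = ∫ z, ∑ p : Fin dx × Fin dy, vec π p * (z.1 p.1 * z.2 p.2) ∂π.1 := by
    rw [norm_sq_eucl, integral_finset_sum _ fun p _ => (int_xy hμ hν π p.1 p.2).const_mul _]
    refine Finset.sum_congr rfl fun p _ => ?_
    rw [integral_const_mul, sq]
    rfl
  have h2 := integral_mono hintsum ((int_xynorm hμ hν π).const_mul ‖vec π‖) hc
  rw [integral_const_mul] at h2
  rcases (norm_nonneg (vec π)).eq_or_lt with h0 | h0
  · rw [← h0]
    exact Real.sqrt_nonneg _
  · have h3 : ‖vec π‖ * ‖vec π‖ ≤ ‖vec π‖ * (∫ z, ‖z.1‖ * ‖z.2‖ ∂π.1) := by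
      rw [← sq, h1]
      exact h2
    have h4 := le_of_mul_le_mul_left h3 h0
    exact h4.trans (P_le hμ hν π)

lemma J_ge (hμ : Integrable (fun x => ‖x‖ ^ 4) μ) (hν : Integrable (fun y => ‖y‖ ^ 4) ν)
    (π : Cpl μ ν) :
    -2*((∫ x, ‖x‖^4 ∂μ) + ∫ y, ‖y‖^4 ∂ν)
      - 8*((∫ x, ‖x‖ ^ 2 ∂μ) * ∫ y, ‖y‖ ^ 2 ∂ν) ≤ J π := by
  have hmx0 : (0:ℝ) ≤ ∫ x, ‖x‖ ^ 2 ∂μ := integral_nonneg fun x => by positivity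
  have hmy0 : (0:ℝ) ≤ ∫ y, ‖y‖ ^ 2 ∂ν := integral_nonneg fun y => by positivity
  have hlow : Integrable
      (fun z : EuclideanSpace ℝ (Fin dx) × EuclideanSpace ℝ (Fin dy) =>
        (-2:ℝ) * (‖z.1‖^4 + ‖z.2‖^4)) π.1 :=
    ((int_x4 hμ π).add (int_y4 hν π)).const_mul (-2)
  have hI := integral_mono hlow (int_I hμ hν π) (fun z => by
    nlinarith [sq_nonneg (‖z.1‖^2 - ‖z.2‖^2)])
  rw [integral_const_mul, integral_add (int_x4 hμ π) (int_y4 hν π),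
    integral_fst_eq (g := fun x => ‖x‖^4) (continuous_norm.pow 4) π,
    integral_snd_eq (g := fun y => ‖y‖^4) (continuous_norm.pow 4) π] at hI
  have hv : ‖vec π‖^2 ≤ (∫ x, ‖x‖ ^ 2 ∂μ) * ∫ y, ‖y‖ ^ 2 ∂ν := by
    have h := vec_norm_le hμ hν π
    have h2 : ‖vec π‖^2 ≤ Real.sqrt ((∫ x, ‖x‖ ^ 2 ∂μ) * ∫ y, ‖y‖ ^ 2 ∂ν)^2 :=
      pow_le_pow_left₀ (norm_nonneg _) h 2
    rwa [Real.sq_sqrt (mul_nonneg hmx0 hmy0)] at h2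
  rw [J]
  have : -2*((∫ x, ‖x‖^4 ∂μ) + ∫ y, ‖y‖^4 ∂ν) ≤ intI π := hI
  linarith

lemma key_eq (hμ : Integrable (fun x => ‖x‖ ^ 4) μ) (hν : Integrable (fun y => ‖y‖ ^ 4) ν)
    (a : EuclideanSpace ℝ (Fin dx × Fin dy)) (π : Cpl μ ν) :
    32 * ‖a‖^2 + ∫ z, cCost (toMat a) z ∂π.1
      = 32 * ‖a - (2⁻¹:ℝ) • vec π‖^2 + J π := by
  rw [int_cCost hμ hν (toMat a) π, toES_toMat, norm_sub_sq_real, real_inner_smul_right,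
    norm_smul, J]
  have h8 : ‖(2⁻¹:ℝ)‖ = 2⁻¹ := by norm_num
  rw [h8, mul_pow]
  ring

end integrals

lemma frobSq_nonneg (A : Matrix (Fin dx) (Fin dy) ℝ) : 0 ≤ frobSq A := by
  unfold frobSq
  positivity

lemma matOpNorm_le (A : Matrix (Fin dx) (Fin dy) ℝ) :
    matOpNorm A ≤ Real.sqrt (frobSq A) := by
  unfold matOpNorm
  have hne : Nonempty {v : EuclideanSpace ℝ (Fin dy) // ‖v‖ ≤ 1} :=
    ⟨⟨0, by simp⟩⟩
  apply ciSup_le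
  rintro ⟨v, hv⟩
  have hAv : ∀ i, (Matrix.toEuclideanLin A v) i = ∑ j, A i j * v j := by
    intro i
    rw [Matrix.toEuclideanLin_apply]
    rfl
  rw [EuclideanSpace.norm_eq]
  apply Real.sqrt_le_sqrt
  have hv2 : ∑ j, (v j)^2 ≤ 1 := by
    have h := norm_sq_eucl v
    nlinarith [norm_nonneg v]
  calc ∑ i, ‖(Matrix.toEuclideanLin A v) i‖^2
      = ∑ i, (∑ j, A i j * v j)^2 := by
        refine Finset.sum_congr rfl fun i _ => ?_
        rw [hAv i, Real.norm_eq_abs, sq_abs]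
    _ ≤ ∑ i, (∑ j, (A i j)^2) * (∑ j, (v j)^2) :=
        Finset.sum_le_sum fun i _ => Finset.sum_mul_sq_le_sq_mul_sq _ _ _
    _ = (∑ i, ∑ j, (A i j)^2) * (∑ j, (v j)^2) := by rw [Finset.sum_mul]
    _ ≤ (∑ i, ∑ j, (A i j)^2) * 1 := by
        apply mul_le_mul_of_nonneg_left hv2
        positivity
    _ = frobSq A := by rw [mul_one]; rfl

end S4

/-- Variational representation of `S₂` (Corollary 4.1 in Zhang et al.):
`S₂(μ,ν) = inf_A {32‖A‖_F² + T_{c_A}(μ,ν)}`, with the infimum achieved by some `A`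
with `‖A‖_op ≤ √(m₂(μ)m₂(ν))/2`. -/
theorem stmt_4 {dx dy : ℕ}
    (μ : Measure (EuclideanSpace ℝ (Fin dx))) (ν : Measure (EuclideanSpace ℝ (Fin dy)))
    [IsProbabilityMeasure μ] [IsProbabilityMeasure ν]
    (hμ : Integrable (fun x => ‖x‖ ^ 4) μ) (hν : Integrable (fun y => ‖y‖ ^ 4) ν) :
    S2 μ ν = (⨅ A : Matrix (Fin dx) (Fin dy) ℝ, (32 * frobSq A + OTcost (cCost A) μ ν)) ∧
      ∃ A : Matrix (Fin dx) (Fin dy) ℝ,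
        matOpNorm A ≤ Real.sqrt ((∫ x, ‖x‖ ^ 2 ∂μ) * ∫ y, ‖y‖ ^ 2 ∂ν) / 2 ∧
        S2 μ ν = 32 * frobSq A + OTcost (cCost A) μ ν := by
  classical
  set Blo : ℝ := -2*((∫ x, ‖x‖^4 ∂μ) + ∫ y, ‖y‖^4 ∂ν)
      - 8*((∫ x, ‖x‖ ^ 2 ∂μ) * ∫ y, ‖y‖ ^ 2 ∂ν) with hBlo
  have hJB : ∀ π : S4.Cpl μ ν, Blo ≤ S4.J π := fun π => S4.J_ge hμ hν π
  set G : EuclideanSpace ℝ (Fin dx × Fin dy) → S4.Cpl μ ν → ℝ :=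
    fun a π => 32 * ‖a - (2⁻¹:ℝ) • S4.vec π‖^2 + S4.J π with hGdef
  set F : EuclideanSpace ℝ (Fin dx × Fin dy) → ℝ :=
    fun a => ⨅ π : S4.Cpl μ ν, G a π with hFdef
  have hGB : ∀ a π, Blo ≤ G a π := fun a π => by
    simp only [hGdef]
    nlinarith [hJB π, sq_nonneg ‖a - (2⁻¹:ℝ) • S4.vec π‖]
  have hbddG : ∀ a, BddBelow (Set.range (G a)) := fun a =>
    ⟨Blo, by rintro x ⟨π, rfl⟩; exact hGB a π⟩
  have hbddJ : BddBelow (Set.range (S4.J : S4.Cpl μ ν → ℝ)) :=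
    ⟨Blo, by rintro x ⟨π, rfl⟩; exact hJB π⟩
  have hS2 : S2 μ ν = ⨅ π : S4.Cpl μ ν, S4.J π := by
    unfold S2
    refine iInf_congr fun π => ?_
    rw [S4.frobSq_vec π]
    rfl
  have hint_eq : ∀ (a : EuclideanSpace ℝ (Fin dx × Fin dy)) (π : S4.Cpl μ ν),
      ∫ z, cCost (S4.toMat a) z ∂π.1 = G a π - 32*‖a‖^2 := fun a π => by
    have h := S4.key_eq hμ hν a π
    simp only [hGdef]
    linarith
  have hOT : ∀ a, OTcost (cCost (S4.toMat a)) μ ν = F a - 32*‖a‖^2 := fun a => by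
    unfold OTcost
    rw [iInf_congr (hint_eq a), S4.ciInf_sub_const (hbddG a) (32*‖a‖^2)]
  have hobj : ∀ a, 32 * frobSq (S4.toMat a) + OTcost (cCost (S4.toMat a)) μ ν = F a :=
    fun a => by rw [S4.frobSq_toMat, hOT a]; ring
  have hS2_le_F : ∀ a, S2 μ ν ≤ F a := fun a => by
    rw [hS2]
    apply ciInf_mono hbddJ
    intro π
    simp only [hGdef]
    nlinarith [sq_nonneg ‖a - (2⁻¹:ℝ) • S4.vec π‖]
  have hF_le_J : ∀ π : S4.Cpl μ ν, F ((2⁻¹:ℝ) • S4.vec π) ≤ S4.J π := fun π => by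
    refine (ciInf_le (hbddG _) π).trans ?_
    simp only [hGdef, sub_self, norm_zero]
    norm_num
  have hmatobj : ∀ A : Matrix (Fin dx) (Fin dy) ℝ,
      32 * frobSq A + OTcost (cCost A) μ ν = F (S4.toES A) := fun A => by
    have h := hobj (S4.toES A)
    rwa [S4.toMat_toES] at h
  have hbddM : BddBelow (Set.range fun A : Matrix (Fin dx) (Fin dy) ℝ =>
      32 * frobSq A + OTcost (cCost A) μ ν) := by
    refine ⟨S2 μ ν, ?_⟩
    rintro x ⟨A, rfl⟩
    show S2 μ ν ≤ 32 * frobSq A + OTcost (cCost A) μ ν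
    rw [hmatobj A]
    exact hS2_le_F _
  have part1 : S2 μ ν
      = ⨅ A : Matrix (Fin dx) (Fin dy) ℝ, (32 * frobSq A + OTcost (cCost A) μ ν) := by
    apply le_antisymm
    · refine le_ciInf fun A => ?_
      rw [hmatobj A]
      exact hS2_le_F _
    · rw [hS2]
      refine le_ciInf fun π => ?_
      refine le_trans (ciInf_le hbddM (S4.toMat ((2⁻¹:ℝ) • S4.vec π))) ?_
      rw [hmatobj, S4.toES_toMat]
      exact hF_le_J π
  -- Part 2
  have hr0 : (0:ℝ) ≤ Real.sqrt ((∫ x, ‖x‖ ^ 2 ∂μ) * ∫ y, ‖y‖ ^ 2 ∂ν) / 2 := by positivity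
  set r : ℝ := Real.sqrt ((∫ x, ‖x‖ ^ 2 ∂μ) * ∫ y, ‖y‖ ^ 2 ∂ν) / 2 with hrdef
  have hvec : ∀ π : S4.Cpl μ ν, ‖(2⁻¹:ℝ) • S4.vec π‖ ≤ r := fun π => by
    have h := S4.vec_norm_le hμ hν π
    rw [norm_smul, Real.norm_eq_abs, abs_of_nonneg (by norm_num : (0:ℝ) ≤ 2⁻¹)]
    rw [hrdef]
    linarith
  set K := Metric.closedBall (0 : EuclideanSpace ℝ (Fin dx × Fin dy)) r with hKdef
  have hK : IsCompact K := isCompact_closedBall _ _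
  have hmemK : ∀ a : EuclideanSpace ℝ (Fin dx × Fin dy), a ∈ K ↔ ‖a‖ ≤ r := fun a => by
    rw [hKdef, Metric.mem_closedBall, dist_zero_right]
  have hKne : K.Nonempty := ⟨0, (hmemK 0).mpr (by simp [hr0])⟩
  have hLip : ∀ a ∈ K, ∀ b ∈ K, F a ≤ F b + 128*r*‖a - b‖ := by
    intro a ha b hb
    rw [hmemK] at ha hb
    have hpt : ∀ π : S4.Cpl μ ν, G a π ≤ G b π + 128*r*‖a - b‖ := by
      intro π
      simp only [hGdef]
      have hc := hvec π
      have h1 := S4.norm_sq_sub_norm_sq_le (a - (2⁻¹:ℝ) • S4.vec π) (b - (2⁻¹:ℝ) • S4.vec π)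
      have h2 : (a - (2⁻¹:ℝ) • S4.vec π) - (b - (2⁻¹:ℝ) • S4.vec π) = a - b := by abel
      rw [h2] at h1
      have h3 : ‖a - (2⁻¹:ℝ) • S4.vec π‖ ≤ 2*r := (norm_sub_le _ _).trans (by linarith)
      have h4 : ‖b - (2⁻¹:ℝ) • S4.vec π‖ ≤ 2*r := (norm_sub_le _ _).trans (by linarith)
      have h5 := mul_le_mul_of_nonneg_left (add_le_add h3 h4) (norm_nonneg (a - b))
      nlinarith [h1, h5, norm_nonneg (a - b)]
    have h6 : ∀ π : S4.Cpl μ ν, F a ≤ G b π + 128*r*‖a - b‖ := fun π =>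
      (ciInf_le (hbddG a) π).trans (hpt π)
    have h7 : F a - 128*r*‖a - b‖ ≤ F b := le_ciInf fun π => by
      have := h6 π
      linarith
    linarith
  have hFcont : ContinuousOn F K := by
    have hL : LipschitzOnWith (Real.toNNReal (128*r)) F K := by
      apply LipschitzOnWith.of_dist_le_mul
      intro x hx y hy
      rw [Real.dist_eq, dist_eq_norm, Real.coe_toNNReal _ (by positivity)]
      have h1 := hLip x hx y hy
      have h2 := hLip y hy x hx
      rw [norm_sub_rev] at h2
      rw [abs_le]
      constructor <;> linarith
    exact hL.continuousOn
  obtain ⟨a₀, ha₀, hmin⟩ := hK.exists_isMinOn hKne hFcont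
  have hmin' : ∀ b ∈ K, F a₀ ≤ F b := fun b hb => hmin hb
  have hglob : ∀ a, F a₀ ≤ F a := by
    intro a
    by_cases haK : ‖a‖ ≤ r
    · exact hmin' a ((hmemK a).mpr haK)
    · push_neg at haK
      have hr_le : r ≤ ‖a‖ := haK.le
      have hpK : ‖(r/‖a‖) • a‖ ≤ r := by
        rw [norm_smul, Real.norm_eq_abs, abs_of_nonneg (div_nonneg hr0 (norm_nonneg a)),
          div_mul_cancel₀ _ (ne_of_gt (hr0.trans_lt haK))]
      have hFpa : F ((r/‖a‖) • a) ≤ F a := by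
        apply ciInf_mono (hbddG _)
        intro π
        simp only [hGdef]
        have hcon := S4.contract a ((2⁻¹:ℝ) • S4.vec π) hr0 (hvec π) hr_le
        nlinarith [pow_le_pow_left₀ (norm_nonneg _) hcon 2]
      exact (hmin' _ ((hmemK _).mpr hpK)).trans hFpa
  have hFa0 : F a₀ = S2 μ ν := by
    apply le_antisymm
    · rw [hS2]
      exact le_ciInf fun π => (hglob _).trans (hF_le_J π)
    · exact hS2_le_F a₀
  refine ⟨part1, S4.toMat a₀, ?_, ?_⟩
  · calc matOpNorm (S4.toMat a₀) ≤ Real.sqrt (frobSq (S4.toMat a₀)) := S4.matOpNorm_le _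
      _ = ‖a₀‖ := by rw [S4.frobSq_toMat, Real.sqrt_sq (norm_nonneg _)]
      _ ≤ r := (hmemK a₀).mp ha₀
  · rw [hobj a₀]
    exact hFa0.symm
end

section
/- Let μ and ν be two-point distributions on {-1, 1} ⊂ ℝ with ν = (1/2)δ_{-1} + (1/2)δ_1 and μ = (1/2 + ε)δ_{-1} + (1/2 - ε)δ_1 for small ε > 0. Then the squared (2,2)-Gromov-Wasserstein distance satisfies D(μ, ν) = 32 ε (1 - ε). -/
open MeasureTheory

lemma integrable_dirac'' {f : ℝ × ℝ → ℝ} (hf : Continuous f) (p : ℝ × ℝ) :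
    Integrable f (Measure.dirac p) := by
  refine ⟨hf.stronglyMeasurable.aestronglyMeasurable, ?_⟩
  rw [HasFiniteIntegral, lintegral_dirac]
  exact ENNReal.coe_lt_top

lemma integrable_four {f : ℝ × ℝ → ℝ} (hf : Continuous f) {a : ENNReal} (ha : a ≠ ⊤) (p : ℝ × ℝ) :
    Integrable f (a • Measure.dirac p) :=
  (integrable_dirac'' hf p).smul_measure ha

lemma integral_four {f : ℝ × ℝ → ℝ} (hf : Continuous f) {a b c d : ENNReal}
    (ha : a ≠ ⊤) (hb : b ≠ ⊤) (hc : c ≠ ⊤) (hd : d ≠ ⊤) (p1 p2 p3 p4 : ℝ × ℝ) :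
    ∫ w, f w ∂(a • Measure.dirac p1 + b • Measure.dirac p2 + c • Measure.dirac p3
        + d • Measure.dirac p4)
      = a.toReal * f p1 + b.toReal * f p2 + c.toReal * f p3 + d.toReal * f p4 := by
  rw [integral_add_measure (((integrable_four hf ha p1).add_measure (integrable_four hf hb p2)).add_measure
        (integrable_four hf hc p3)) (integrable_four hf hd p4),
      integral_add_measure ((integrable_four hf ha p1).add_measure (integrable_four hf hb p2))
        (integrable_four hf hc p3),
      integral_add_measure (integrable_four hf ha p1) (integrable_four hf hb p2)]
  simp [integral_smul_measure, integral_dirac, smul_eq_mul]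

lemma eq_four {π : Measure (ℝ × ℝ)} {p1 p2 p3 p4 : ℝ × ℝ}
    (h12 : p1 ≠ p2) (h13 : p1 ≠ p3) (h14 : p1 ≠ p4) (h23 : p2 ≠ p3) (h24 : p2 ≠ p4)
    (h34 : p3 ≠ p4)
    (h : π ({p1, p2, p3, p4} : Set (ℝ × ℝ))ᶜ = 0) :
    π = π {p1} • Measure.dirac p1 + π {p2} • Measure.dirac p2 + π {p3} • Measure.dirac p3
        + π {p4} • Measure.dirac p4 := by
  have hmem : ∀ᵐ x ∂π, x ∈ ({p1, p2, p3, p4} : Set (ℝ × ℝ)) := by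
    rw [MeasureTheory.ae_iff]
    exact h
  have hU : ({p1, p2, p3, p4} : Set (ℝ × ℝ)) = {p1} ∪ ({p2} ∪ ({p3} ∪ {p4})) := by
    simp only [Set.insert_eq]
  conv_lhs => rw [← Measure.restrict_eq_self_of_ae_mem hmem, hU]
  rw [Measure.restrict_union (by simp [Set.disjoint_left, h12, h13, h14]) (by simp),
      Measure.restrict_union (by simp [Set.disjoint_left, h23, h24]) (by simp),
      Measure.restrict_union (by simp [Set.disjoint_left, h34]) (by simp)]
  simp only [Measure.restrict_singleton]
  abel

lemma J_four {a b c d : ENNReal} (ha : a ≠ ⊤) (hb : b ≠ ⊤) (hc : c ≠ ⊤) (hd : d ≠ ⊤) :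
    ∫ w, ∫ w', ((w.1 - w'.1) ^ 2 - (w.2 - w'.2) ^ 2) ^ 2
        ∂(a • Measure.dirac ((-1:ℝ),(-1:ℝ)) + b • Measure.dirac ((-1:ℝ),(1:ℝ))
          + c • Measure.dirac ((1:ℝ),(-1:ℝ)) + d • Measure.dirac ((1:ℝ),(1:ℝ)))
        ∂(a • Measure.dirac ((-1:ℝ),(-1:ℝ)) + b • Measure.dirac ((-1:ℝ),(1:ℝ))
          + c • Measure.dirac ((1:ℝ),(-1:ℝ)) + d • Measure.dirac ((1:ℝ),(1:ℝ)))
      = 32 * (a.toReal * b.toReal + a.toReal * c.toReal + b.toReal * d.toReal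
          + c.toReal * d.toReal) := by
  have hin : ∀ w : ℝ × ℝ,
      (∫ w', ((w.1 - w'.1) ^ 2 - (w.2 - w'.2) ^ 2) ^ 2
        ∂(a • Measure.dirac ((-1:ℝ),(-1:ℝ)) + b • Measure.dirac ((-1:ℝ),(1:ℝ))
          + c • Measure.dirac ((1:ℝ),(-1:ℝ)) + d • Measure.dirac ((1:ℝ),(1:ℝ))))
      = a.toReal * ((w.1 - (-1)) ^ 2 - (w.2 - (-1)) ^ 2) ^ 2
        + b.toReal * ((w.1 - (-1)) ^ 2 - (w.2 - 1) ^ 2) ^ 2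
        + c.toReal * ((w.1 - 1) ^ 2 - (w.2 - (-1)) ^ 2) ^ 2
        + d.toReal * ((w.1 - 1) ^ 2 - (w.2 - 1) ^ 2) ^ 2 := by
    intro w
    exact integral_four (by fun_prop) ha hb hc hd _ _ _ _
  simp only [hin]
  rw [integral_four (by fun_prop) ha hb hc hd _ _ _ _]
  norm_num
  ring

/-- The squared `(2,2)`-Gromov-Wasserstein distance between measures on `ℝ`:
`D(μ,ν) = inf_{π ∈ Π(μ,ν)} ∬ (|x-x'|² - |y-y'|²)² dπ dπ`. -/
noncomputable def Dgw (μ ν : Measure ℝ) : ℝ :=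
  ⨅ π : {π : Measure (ℝ × ℝ) // π.fst = μ ∧ π.snd = ν},
    ∫ w, ∫ w', ((w.1 - w'.1) ^ 2 - (w.2 - w'.2) ^ 2) ^ 2 ∂π.1 ∂π.1

/-- For `ν = (1/2)δ₋₁ + (1/2)δ₁` and `μ = (1/2+ε)δ₋₁ + (1/2-ε)δ₁` with small `ε > 0`,
one has `D(μ,ν) = 32 ε (1-ε)`. -/
theorem stmt_5 :
    ∃ ε₀ > (0:ℝ), ∀ ε : ℝ, 0 < ε → ε < ε₀ →
      Dgw (ENNReal.ofReal (1/2 + ε) • Measure.dirac (-1)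
            + ENNReal.ofReal (1/2 - ε) • Measure.dirac 1)
          (ENNReal.ofReal (1/2) • Measure.dirac (-1)
            + ENNReal.ofReal (1/2) • Measure.dirac 1)
        = 32 * ε * (1 - ε) := by
  refine ⟨1/2, by norm_num, fun ε hε hε2 => ?_⟩
  have h1 : (0:ℝ) ≤ 1/2 + ε := by linarith
  have h2 : (0:ℝ) ≤ 1/2 - ε := by linarith
  set μ : Measure ℝ := ENNReal.ofReal (1/2 + ε) • Measure.dirac (-1)
      + ENNReal.ofReal (1/2 - ε) • Measure.dirac 1 with hμ
  set ν : Measure ℝ := ENNReal.ofReal (1/2) • Measure.dirac (-1)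
      + ENNReal.ofReal (1/2) • Measure.dirac 1 with hν
  set π₀ : Measure (ℝ × ℝ) :=
      ENNReal.ofReal (1/2) • Measure.dirac ((-1:ℝ),(-1:ℝ))
      + ENNReal.ofReal ε • Measure.dirac ((-1:ℝ),(1:ℝ))
      + ENNReal.ofReal 0 • Measure.dirac ((1:ℝ),(-1:ℝ))
      + ENNReal.ofReal (1/2 - ε) • Measure.dirac ((1:ℝ),(1:ℝ)) with hπ₀
  have hfst0 : π₀.fst = μ := by
    rw [hπ₀, Measure.fst, Measure.map_add _ _ measurable_fst, Measure.map_add _ _ measurable_fst,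
      Measure.map_add _ _ measurable_fst, Measure.map_smul, Measure.map_smul, Measure.map_smul,
      Measure.map_smul, Measure.map_dirac' measurable_fst, Measure.map_dirac' measurable_fst,
      Measure.map_dirac' measurable_fst, Measure.map_dirac' measurable_fst]
    rw [hμ, show ENNReal.ofReal (1/2 + ε) = ENNReal.ofReal (1/2) + ENNReal.ofReal ε from
      ENNReal.ofReal_add (by norm_num) hε.le, ENNReal.ofReal_zero, zero_smul, add_smul]
    abel
  have hsnd0 : π₀.snd = ν := by
    rw [hπ₀, Measure.snd, Measure.map_add _ _ measurable_snd, Measure.map_add _ _ measurable_snd,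
      Measure.map_add _ _ measurable_snd, Measure.map_smul, Measure.map_smul, Measure.map_smul,
      Measure.map_smul, Measure.map_dirac' measurable_snd, Measure.map_dirac' measurable_snd,
      Measure.map_dirac' measurable_snd, Measure.map_dirac' measurable_snd]
    rw [hν, show (ENNReal.ofReal (1/2) : ENNReal) = ENNReal.ofReal ε + ENNReal.ofReal (1/2 - ε) by
      rw [← ENNReal.ofReal_add hε.le h2]; norm_num, ENNReal.ofReal_zero, zero_smul, add_smul,
      add_smul]
    abel
  haveI hne : Nonempty {π : Measure (ℝ × ℝ) // π.fst = μ ∧ π.snd = ν} := ⟨⟨π₀, hfst0, hsnd0⟩⟩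
  refine le_antisymm ?_ ?_
  · have h0val : (∫ w, ∫ w', ((w.1 - w'.1) ^ 2 - (w.2 - w'.2) ^ 2) ^ 2 ∂π₀ ∂π₀)
        = 32 * ε * (1 - ε) := by
      rw [hπ₀]
      rw [J_four ENNReal.ofReal_ne_top ENNReal.ofReal_ne_top ENNReal.ofReal_ne_top
        ENNReal.ofReal_ne_top]
      rw [ENNReal.toReal_ofReal (by norm_num), ENNReal.toReal_ofReal hε.le,
        ENNReal.toReal_ofReal le_rfl, ENNReal.toReal_ofReal h2]
      ring
    rw [Dgw]
    have hbdd : BddBelow (Set.range fun π : {π : Measure (ℝ × ℝ) // π.fst = μ ∧ π.snd = ν} =>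
        ∫ w, ∫ w', ((w.1 - w'.1) ^ 2 - (w.2 - w'.2) ^ 2) ^ 2 ∂π.1 ∂π.1) := by
      refine ⟨0, ?_⟩
      rintro x ⟨π, rfl⟩
      exact integral_nonneg fun w => integral_nonneg fun w' => by positivity
    exact le_of_le_of_eq
      (ciInf_le hbdd (⟨π₀, hfst0, hsnd0⟩ : {π : Measure (ℝ × ℝ) // π.fst = μ ∧ π.snd = ν})) h0val
  · rw [Dgw]
    refine le_ciInf fun π => ?_
    obtain ⟨hfstπ, hsndπ⟩ := π.2
    haveI hfin : IsFiniteMeasure π.1 := by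
      constructor
      rw [← Measure.fst_univ, hfstπ, hμ]
      simp [ENNReal.ofReal_lt_top, ENNReal.add_lt_top]
    set a := π.1 {((-1:ℝ),(-1:ℝ))} with hA
    set b := π.1 {((-1:ℝ),(1:ℝ))} with hB
    set c := π.1 {((1:ℝ),(-1:ℝ))} with hC
    set d := π.1 {((1:ℝ),(1:ℝ))} with hD
    have ha : a ≠ ⊤ := measure_ne_top _ _
    have hb : b ≠ ⊤ := measure_ne_top _ _
    have hc : c ≠ ⊤ := measure_ne_top _ _
    have hd : d ≠ ⊤ := measure_ne_top _ _
    have hconc : π.1 (({((-1:ℝ),(-1:ℝ)), ((-1:ℝ),(1:ℝ)), ((1:ℝ),(-1:ℝ)), ((1:ℝ),(1:ℝ))} :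
        Set (ℝ × ℝ))ᶜ) = 0 := by
      have hf0 : π.1 (Prod.fst ⁻¹' (({-1, 1} : Set ℝ)ᶜ)) = 0 := by
        rw [← Measure.fst_apply (by simp : MeasurableSet (({-1, 1} : Set ℝ)ᶜ)), hfstπ, hμ]
        simp [Measure.dirac_apply, Set.indicator_apply]
      have hs0 : π.1 (Prod.snd ⁻¹' (({-1, 1} : Set ℝ)ᶜ)) = 0 := by
        rw [← Measure.snd_apply (by simp : MeasurableSet (({-1, 1} : Set ℝ)ᶜ)), hsndπ, hν]
        simp [Measure.dirac_apply, Set.indicator_apply]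
      refine measure_mono_null ?_ (measure_union_null hf0 hs0)
      intro x hx
      simp only [Set.mem_compl_iff, Set.mem_insert_iff, Set.mem_singleton_iff] at hx
      simp only [Set.mem_union, Set.mem_preimage, Set.mem_compl_iff, Set.mem_insert_iff,
        Set.mem_singleton_iff]
      by_contra hcon
      push_neg at hcon
      obtain ⟨hx1, hx2⟩ := hcon
      apply hx
      rcases hx1 with h | h <;> rcases hx2 with h' | h' <;> simp [Prod.ext_iff, h, h']
    have hdec : π.1 = a • Measure.dirac ((-1:ℝ),(-1:ℝ)) + b • Measure.dirac ((-1:ℝ),(1:ℝ))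
        + c • Measure.dirac ((1:ℝ),(-1:ℝ)) + d • Measure.dirac ((1:ℝ),(1:ℝ)) :=
      eq_four (by norm_num [Prod.ext_iff]) (by norm_num [Prod.ext_iff])
        (by norm_num [Prod.ext_iff]) (by norm_num [Prod.ext_iff])
        (by norm_num [Prod.ext_iff]) (by norm_num [Prod.ext_iff]) hconc
    have e1 : a + b = ENNReal.ofReal (1/2 + ε) := by
      have h := congrArg (fun m : Measure ℝ => m {(-1:ℝ)}) hfstπ
      simp only [hμ] at h
      rw [Measure.fst_apply (measurableSet_singleton _), hdec] at h
      simpa [Measure.dirac_apply, Set.indicator_apply, Set.mem_preimage,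
        show ¬((1:ℝ) = -1) by norm_num, show ¬((-1:ℝ) = 1) by norm_num] using h
    have e2 : c + d = ENNReal.ofReal (1/2 - ε) := by
      have h := congrArg (fun m : Measure ℝ => m {(1:ℝ)}) hfstπ
      simp only [hμ] at h
      rw [Measure.fst_apply (measurableSet_singleton _), hdec] at h
      simpa [Measure.dirac_apply, Set.indicator_apply, Set.mem_preimage,
        show ¬((1:ℝ) = -1) by norm_num, show ¬((-1:ℝ) = 1) by norm_num] using h
    have e3 : a + c = ENNReal.ofReal (1/2) := by
      have h := congrArg (fun m : Measure ℝ => m {(-1:ℝ)}) hsndπ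
      simp only [hν] at h
      rw [Measure.snd_apply (measurableSet_singleton _), hdec] at h
      simpa [Measure.dirac_apply, Set.indicator_apply, Set.mem_preimage,
        show ¬((1:ℝ) = -1) by norm_num, show ¬((-1:ℝ) = 1) by norm_num] using h
    have E1 : a.toReal + b.toReal = 1/2 + ε := by
      rw [← ENNReal.toReal_add ha hb, e1, ENNReal.toReal_ofReal h1]
    have E2 : c.toReal + d.toReal = 1/2 - ε := by
      rw [← ENNReal.toReal_add hc hd, e2, ENNReal.toReal_ofReal h2]
    have E3 : a.toReal + c.toReal = 1/2 := by
      rw [← ENNReal.toReal_add ha hc, e3, ENNReal.toReal_ofReal (by norm_num)]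
    have hCge : (0:ℝ) ≤ c.toReal := ENNReal.toReal_nonneg
    have hDge : (0:ℝ) ≤ d.toReal := ENNReal.toReal_nonneg
    have hBge : (0:ℝ) ≤ b.toReal := ENNReal.toReal_nonneg
    calc 32 * ε * (1 - ε)
        ≤ 32 * (a.toReal * b.toReal + a.toReal * c.toReal + b.toReal * d.toReal
            + c.toReal * d.toReal) := by nlinarith [mul_nonneg hCge hDge, mul_nonneg hBge hCge]
      _ = _ := by rw [← J_four ha hb hc hd, ← hdec]
end

section
/- For every sufficiently large integer k and dimension d, there exists a set {x_1, ..., x_k} ⊂ B(0,1) ⊂ ℝ^d with pairwise distances ||x_i - x_j|| ≥ c k^{-1/d} for i ≠ j, and such that the covariance matrix Σ of the uniform distribution on {x_1,...,x_k} satisfies λ_min(Σ) ≥ c, where c > 0 is a constant depending only on d. -/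
open scoped BigOperators
open Finset

namespace Stmt11Aux



lemma value_digits (N : ℕ) (hN : 0 < N) : ∀ (d i : ℕ), i < N^d →
    ∑ l ∈ range d, (i / N^l % N) * N^l = i := by
  intro d
  induction d with
  | zero => intro i hi; simp at hi ⊢; omega
  | succ d ih =>
    intro i hi
    rw [Finset.sum_range_succ']
    simp only [pow_zero, Nat.div_one, mul_one]
    have hterm : ∀ l, i / N^(l+1) % N * N^(l+1) = (i / N / N^l % N * N^l) * N := by
      intro l
      rw [pow_succ', ← Nat.div_div_eq_div_mul]
      ring
    have hdiv : i / N < N^d := by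
      rw [Nat.div_lt_iff_lt_mul hN]
      calc i < N^(d+1) := hi
        _ = N^d * N := pow_succ N d
    calc ∑ l ∈ range d, i / N^(l+1) % N * N^(l+1) + i % N
        = (∑ l ∈ range d, i / N / N^l % N * N^l) * N + i % N := by
          rw [Finset.sum_mul]; congr 1; exact Finset.sum_congr rfl fun l _ => hterm l
      _ = i / N * N + i % N := by rw [ih _ hdiv]
      _ = i := Nat.div_add_mod' i N

lemma digits_value (N : ℕ) (hN : 0 < N) : ∀ (d : ℕ) (g : ℕ → ℕ), (∀ l, l < d → g l < N) →
    ∀ l, l < d → (∑ l' ∈ range d, g l' * N^l') / N^l % N = g l := by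
  intro d
  induction d with
  | zero => intro g hg l hl; omega
  | succ d ih =>
    intro g hg l hl
    rw [Finset.sum_range_succ']
    simp only [pow_zero, mul_one]
    have hv : ∑ l' ∈ range d, g (l'+1) * N^(l'+1) = N * ∑ l' ∈ range d, g (l'+1) * N^l' := by
      rw [Finset.mul_sum]
      exact Finset.sum_congr rfl fun l' _ => by rw [pow_succ']; ring
    rw [hv]
    rcases Nat.eq_zero_or_pos l with rfl | hlpos
    · simp only [pow_zero, Nat.div_one]
      rw [Nat.mul_add_mod]
      exact Nat.mod_eq_of_lt (hg 0 (Nat.succ_pos d))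
    · obtain ⟨t, rfl⟩ := Nat.exists_eq_add_of_le hlpos
      simp only [show Nat.succ 0 + t = t + 1 from by omega] at hl ⊢
      rw [pow_succ', ← Nat.div_div_eq_div_mul]
      rw [Nat.mul_add_div hN]
      rw [Nat.div_eq_of_lt (hg 0 (Nat.succ_pos d)), Nat.add_zero]
      exact ih (fun l' => g (l'+1)) (fun l' hl' => hg (l'+1) (by omega)) t (by omega)

lemma value_lt (N : ℕ) (hN : 0 < N) : ∀ (d : ℕ) (g : ℕ → ℕ), (∀ l, l < d → g l < N) →
    ∑ l ∈ range d, g l * N^l < N^d := by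
  intro d
  induction d with
  | zero => intro g hg; simp
  | succ d ih =>
    intro g hg
    rw [Finset.sum_range_succ]
    have h1 : ∑ l ∈ range d, g l * N^l < N^d := ih g (fun l hl => hg l (by omega))
    have h2 : g d < N := hg d (by omega)
    have h3 : N^(d+1) = N^d * N := pow_succ N d
    nlinarith [pow_pos hN d]





variable {d : ℕ}

lemma grid_sum_prod (M : Fin d → ℕ) (φ : Fin d → ℕ → ℝ) :
    ∑ g ∈ Fintype.piFinset (fun l => range (M l)), ∏ l, φ l (g l)
      = ∏ l, ∑ a ∈ range (M l), φ l a :=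
  (Finset.prod_univ_sum _ _).symm

lemma grid_card (M : Fin d → ℕ) :
    ∑ _g ∈ Fintype.piFinset (fun l => range (M l)), (1:ℝ) = ∏ l, (M l : ℝ) := by
  have := grid_sum_prod M (fun _ _ => (1:ℝ))
  simpa using this

lemma grid_sum_single (M : Fin d → ℕ) (l : Fin d) (φ : ℕ → ℝ) :
    ∑ g ∈ Fintype.piFinset (fun l => range (M l)), φ (g l)
      = (∏ l' ∈ univ.erase l, (M l' : ℝ)) * ∑ a ∈ range (M l), φ a := by
  have h := grid_sum_prod M (fun l' a => if l' = l then φ a else 1)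
  have hL : ∀ g : Fin d → ℕ, (∏ l', if l' = l then φ (g l') else 1) = φ (g l) := by
    intro g
    rw [← Finset.mul_prod_erase univ _ (mem_univ l)]
    rw [Finset.prod_eq_one (fun l' hl' => if_neg (Finset.ne_of_mem_erase hl'))]
    simp
  have hR : (∏ l', ∑ a ∈ range (M l'), if l' = l then φ a else 1)
      = (∑ a ∈ range (M l), φ a) * ∏ l' ∈ univ.erase l, (M l' : ℝ) := by
    rw [← Finset.mul_prod_erase univ _ (mem_univ l)]
    congr 1
    · simp
    · exact Finset.prod_congr rfl fun l' hl' => by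
        simp [if_neg (Finset.ne_of_mem_erase hl')]
  calc ∑ g ∈ Fintype.piFinset (fun l => range (M l)), φ (g l)
      = ∑ g ∈ Fintype.piFinset (fun l => range (M l)), ∏ l', (if l' = l then φ (g l') else 1) := by
        exact Finset.sum_congr rfl fun g _ => (hL g).symm
    _ = ∏ l', ∑ a ∈ range (M l'), if l' = l then φ a else 1 := h
    _ = (∑ a ∈ range (M l), φ a) * ∏ l' ∈ univ.erase l, (M l' : ℝ) := hR
    _ = _ := mul_comm _ _

lemma grid_sum_pair (M : Fin d → ℕ) {l l' : Fin d} (hne : l ≠ l') (φ ψ : ℕ → ℝ) :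
    ∑ g ∈ Fintype.piFinset (fun l => range (M l)), φ (g l) * ψ (g l')
      = (∏ l'' ∈ (univ.erase l).erase l', (M l'' : ℝ)) *
          ((∑ a ∈ range (M l), φ a) * (∑ a ∈ range (M l'), ψ a)) := by
  have h := grid_sum_prod M (fun l'' a => if l'' = l then φ a else if l'' = l' then ψ a else 1)
  have hl'mem : l' ∈ univ.erase l := Finset.mem_erase.2 ⟨hne.symm, mem_univ l'⟩
  have hL : ∀ g : Fin d → ℕ,
      (∏ l'', if l'' = l then φ (g l'') else if l'' = l' then ψ (g l'') else 1)
        = φ (g l) * ψ (g l') := by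
    intro g
    rw [← Finset.mul_prod_erase univ _ (mem_univ l), ← Finset.mul_prod_erase _ _ hl'mem]
    rw [Finset.prod_eq_one (fun l'' hl'' => ?_)]
    · simp [hne, hne.symm]
    · have h1 : l'' ≠ l' := Finset.ne_of_mem_erase hl''
      have h2 : l'' ≠ l := Finset.ne_of_mem_erase (Finset.mem_of_mem_erase hl'')
      simp [if_neg h1, if_neg h2]
  have hR : (∏ l'', ∑ a ∈ range (M l''), if l'' = l then φ a else if l'' = l' then ψ a else 1)
      = (∑ a ∈ range (M l), φ a) * ((∑ a ∈ range (M l'), ψ a) *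
          ∏ l'' ∈ (univ.erase l).erase l', (M l'' : ℝ)) := by
    rw [← Finset.mul_prod_erase univ _ (mem_univ l), ← Finset.mul_prod_erase _ _ hl'mem]
    congr 1
    · simp
    congr 1
    · simp [if_neg hne.symm]
    · refine Finset.prod_congr rfl fun l'' hl'' => ?_
      have h1 : l'' ≠ l' := Finset.ne_of_mem_erase hl''
      have h2 : l'' ≠ l := Finset.ne_of_mem_erase (Finset.mem_of_mem_erase hl'')
      simp [if_neg h1, if_neg h2]
  calc ∑ g ∈ Fintype.piFinset (fun l => range (M l)), φ (g l) * ψ (g l')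
      = ∑ g ∈ Fintype.piFinset (fun l => range (M l)),
          ∏ l'', (if l'' = l then φ (g l'') else if l'' = l' then ψ (g l'') else 1) :=
        Finset.sum_congr rfl fun g _ => (hL g).symm
    _ = _ := h.trans (by rw [hR]; ring)


lemma double_sum_mul_expand {α : Type*} (s : Finset α) (A C : α → ℝ) :
    ∑ p ∈ s, ∑ q ∈ s, (A p - A q) * (C p - C q)
      = 2 * (s.card : ℝ) * (∑ p ∈ s, A p * C p) - 2 * (∑ p ∈ s, A p) * (∑ p ∈ s, C p) := by
  have h0 : ∀ p q, (A p - A q) * (C p - C q)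
      = A p * C p - A p * C q - A q * C p + A q * C q := fun p q => by ring
  simp_rw [h0, Finset.sum_add_distrib, Finset.sum_sub_distrib, Finset.sum_const,
    nsmul_eq_mul, ← Finset.mul_sum, ← Finset.sum_mul]
  rw [← Finset.mul_sum]
  ring

lemma grid_double_diag (M : Fin d → ℕ) (l : Fin d) :
    ∑ g ∈ Fintype.piFinset (fun l => range (M l)),
      ∑ g' ∈ Fintype.piFinset (fun l => range (M l)),
        ((g l : ℝ) - (g' l : ℝ)) * ((g l : ℝ) - (g' l : ℝ))
      = (∏ l' ∈ univ.erase l, (M l' : ℝ)) * (∏ l' ∈ univ.erase l, (M l' : ℝ)) *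
        (∑ a ∈ range (M l), ∑ b ∈ range (M l), ((a:ℝ) - (b:ℝ)) * ((a:ℝ) - (b:ℝ))) := by
  rw [double_sum_mul_expand (Fintype.piFinset (fun l => range (M l)))
        (fun g => (g l : ℝ)) (fun g => (g l : ℝ)),
      double_sum_mul_expand (range (M l)) (fun a => (a:ℝ)) (fun a => (a:ℝ))]
  have hcard : ((Fintype.piFinset (fun l => range (M l))).card : ℝ) = ∏ l', (M l' : ℝ) := by
    rw [Fintype.card_piFinset]
    push_cast
    simp
  have h1 := grid_sum_single M l (fun a => (a:ℝ) * (a:ℝ))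
  have h2 := grid_sum_single M l (fun a => (a:ℝ))
  rw [hcard, h1, h2, Finset.card_range]
  have hP : ∏ l', (M l' : ℝ) = (M l : ℝ) * ∏ l' ∈ univ.erase l, (M l' : ℝ) :=
    (Finset.mul_prod_erase univ _ (mem_univ l)).symm
  rw [hP]
  ring

lemma grid_double_cross (M : Fin d → ℕ) {l l' : Fin d} (hne : l ≠ l') :
    ∑ g ∈ Fintype.piFinset (fun l => range (M l)),
      ∑ g' ∈ Fintype.piFinset (fun l => range (M l)),
        ((g l : ℝ) - (g' l : ℝ)) * ((g l' : ℝ) - (g' l' : ℝ)) = 0 := by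
  rw [double_sum_mul_expand (Fintype.piFinset (fun l => range (M l)))
        (fun g => (g l : ℝ)) (fun g => (g l' : ℝ))]
  have hcard : ((Fintype.piFinset (fun l => range (M l))).card : ℝ) = ∏ l'', (M l'' : ℝ) := by
    rw [Fintype.card_piFinset]
    push_cast
    simp
  have h1 := grid_sum_pair M hne (fun a => (a:ℝ)) (fun a => (a:ℝ))
  have h2 := grid_sum_single M l (fun a => (a:ℝ))
  have h3 := grid_sum_single M l' (fun a => (a:ℝ))
  rw [hcard, h1, h2, h3]
  have e1 : ∏ l'' ∈ univ.erase l, (M l'' : ℝ)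
      = (M l' : ℝ) * ∏ l'' ∈ (univ.erase l).erase l', (M l'' : ℝ) :=
    (Finset.mul_prod_erase _ _ (Finset.mem_erase.2 ⟨hne.symm, mem_univ l'⟩)).symm
  have e2 : ∏ l'' ∈ univ.erase l', (M l'' : ℝ)
      = (M l : ℝ) * ∏ l'' ∈ (univ.erase l).erase l', (M l'' : ℝ) := by
    rw [Finset.erase_right_comm]
    exact (Finset.mul_prod_erase _ _ (Finset.mem_erase.2 ⟨hne, mem_univ l⟩)).symm
  have e3 : ∏ l'', (M l'' : ℝ) = (M l : ℝ) * ∏ l'' ∈ univ.erase l, (M l'' : ℝ) :=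
    (Finset.mul_prod_erase univ _ (mem_univ l)).symm
  rw [e3, e1, e2]
  ring

lemma quad_swap {β : Type*} (s t : Finset β) (F : Fin d → Fin d → β → β → ℝ) :
    ∑ g ∈ s, ∑ g' ∈ t, ∑ l, ∑ l', F l l' g g'
      = ∑ l, ∑ l', ∑ g ∈ s, ∑ g' ∈ t, F l l' g g' :=
  calc ∑ g ∈ s, ∑ g' ∈ t, ∑ l, ∑ l', F l l' g g'
      = ∑ g ∈ s, ∑ l, ∑ g' ∈ t, ∑ l', F l l' g g' :=
        Finset.sum_congr rfl fun g _ => Finset.sum_comm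
    _ = ∑ l, ∑ g ∈ s, ∑ g' ∈ t, ∑ l', F l l' g g' := Finset.sum_comm
    _ = ∑ l, ∑ g ∈ s, ∑ l', ∑ g' ∈ t, F l l' g g' :=
        Finset.sum_congr rfl fun l _ => Finset.sum_congr rfl fun g _ => Finset.sum_comm
    _ = ∑ l, ∑ l', ∑ g ∈ s, ∑ g' ∈ t, F l l' g g' :=
        Finset.sum_congr rfl fun l _ => Finset.sum_comm

lemma grid_pair_sum (M : Fin d → ℕ) (w : Fin d → ℝ) :
    ∑ g ∈ Fintype.piFinset (fun l => range (M l)),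
      ∑ g' ∈ Fintype.piFinset (fun l => range (M l)),
        (∑ l, ((g l : ℝ) - (g' l : ℝ)) * w l)^2
      = ∑ l, (∏ l' ∈ univ.erase l, (M l' : ℝ))^2 *
          (∑ a ∈ range (M l), ∑ b ∈ range (M l), ((a:ℝ) - (b:ℝ))^2) * (w l)^2 := by
  have expand : ∀ (g g' : Fin d → ℕ), (∑ l, ((g l : ℝ) - (g' l : ℝ)) * w l)^2
      = ∑ l, ∑ l', (((g l : ℝ) - (g' l : ℝ)) * ((g l' : ℝ) - (g' l' : ℝ))) * (w l * w l') := by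
    intro g g'
    rw [pow_two, Finset.sum_mul_sum]
    exact Finset.sum_congr rfl fun l _ => Finset.sum_congr rfl fun l' _ => by ring
  simp_rw [expand]
  rw [quad_swap]
  refine Finset.sum_congr rfl fun l _ => ?_
  have pull : ∀ l' : Fin d,
      ∑ g ∈ Fintype.piFinset (fun l => range (M l)), ∑ g' ∈ Fintype.piFinset (fun l => range (M l)),
        (((g l : ℝ) - (g' l : ℝ)) * ((g l' : ℝ) - (g' l' : ℝ))) * (w l * w l')
      = (∑ g ∈ Fintype.piFinset (fun l => range (M l)), ∑ g' ∈ Fintype.piFinset (fun l => range (M l)),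
          ((g l : ℝ) - (g' l : ℝ)) * ((g l' : ℝ) - (g' l' : ℝ))) * (w l * w l') := by
    intro l'
    rw [Finset.sum_mul]
    exact Finset.sum_congr rfl fun g _ => (Finset.sum_mul _ _ _).symm
  simp_rw [pull]
  rw [← Finset.add_sum_erase univ _ (mem_univ l)]
  have hzero : ∑ l' ∈ univ.erase l,
      (∑ g ∈ Fintype.piFinset (fun l => range (M l)), ∑ g' ∈ Fintype.piFinset (fun l => range (M l)),
        ((g l : ℝ) - (g' l : ℝ)) * ((g l' : ℝ) - (g' l' : ℝ))) * (w l * w l') = 0 := by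
    refine Finset.sum_eq_zero fun l' hl' => ?_
    rw [grid_double_cross M (Finset.ne_of_mem_erase hl').symm, zero_mul]
  rw [hzero, add_zero, grid_double_diag]
  have : ∑ a ∈ range (M l), ∑ b ∈ range (M l), ((a:ℝ) - (b:ℝ)) * ((a:ℝ) - (b:ℝ))
      = ∑ a ∈ range (M l), ∑ b ∈ range (M l), ((a:ℝ) - (b:ℝ))^2 := by
    simp_rw [pow_two]
  rw [this]
  ring


lemma pair_sum_identity {k : ℕ} (hk : 0 < k) (z : Fin k → ℝ) :
    ∑ i, ∑ j, (z i - z j)^2 = 2*(k:ℝ)*∑ i, (z i - (k:ℝ)⁻¹ * ∑ j, z j)^2 := by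
  have hkR : (k:ℝ) ≠ 0 := Nat.cast_ne_zero.2 hk.ne'
  simp_rw [pow_two]
  rw [double_sum_mul_expand univ z z]
  have h : ∀ i : Fin k, (z i - (k:ℝ)⁻¹ * ∑ j, z j) * (z i - (k:ℝ)⁻¹ * ∑ j, z j)
      = z i * z i - 2 * (k:ℝ)⁻¹ * (∑ j, z j) * z i + ((k:ℝ)⁻¹ * ∑ j, z j) * ((k:ℝ)⁻¹ * ∑ j, z j) :=
    fun i => by ring
  simp_rw [h, Finset.sum_add_distrib, Finset.sum_sub_distrib, ← Finset.mul_sum, Finset.sum_const,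
    Finset.card_univ, Fintype.card_fin, nsmul_eq_mul]
  field_simp
  ring

lemma range_pair_sq_lb (Mv : ℕ) (hM : 8 ≤ Mv) :
    ((Mv:ℝ))^4 / 1024 ≤ ∑ a ∈ range Mv, ∑ b ∈ range Mv, ((a:ℝ) - (b:ℝ))^2 := by
  set q := Mv / 4 with hq
  have hq2 : 2 ≤ q := by omega
  have h4q : 4*q ≤ Mv := by omega
  have h8q : Mv ≤ 8*q := by omega
  have hnonneg : ∀ (s : Finset ℕ) (a : ℕ), (0:ℝ) ≤ ∑ b ∈ s, ((a:ℝ) - (b:ℝ))^2 :=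
    fun s a => Finset.sum_nonneg fun b _ => sq_nonneg _
  have step2 : (q:ℝ) * q * (2*q)^2 ≤ ∑ a ∈ Ico (3*q) (4*q), ∑ b ∈ range q, ((a:ℝ) - (b:ℝ))^2 := by
    have hterm : ∀ a ∈ Ico (3*q) (4*q), ∀ b ∈ range q, ((2*q:ℝ))^2 ≤ ((a:ℝ) - (b:ℝ))^2 := by
      intro a ha b hb
      rw [mem_Ico] at ha
      rw [mem_range] at hb
      have h1 : (3*q:ℝ) ≤ a := by exact_mod_cast ha.1
      have h2 : (b:ℝ) + 1 ≤ (q:ℝ) := by exact_mod_cast hb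
      have h3 : (0:ℝ) ≤ 2*(q:ℝ) := by positivity
      have h4 : (2*(q:ℝ)) ≤ (a:ℝ) - b := by push_cast at h1 h2 ⊢; linarith
      calc ((2*q:ℝ))^2 = (2*(q:ℝ))^2 := by push_cast; ring
        _ ≤ ((a:ℝ) - (b:ℝ))^2 := by nlinarith
    calc (q:ℝ) * q * (2*q)^2
        = ∑ _a ∈ Ico (3*q) (4*q), ∑ _b ∈ range q, ((2*q:ℝ))^2 := by
          rw [Finset.sum_const, Finset.sum_const, Nat.card_Ico, Finset.card_range]
          have : 4*q - 3*q = q := by omega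
          rw [this, nsmul_eq_mul, nsmul_eq_mul]
          push_cast
          ring
      _ ≤ _ := Finset.sum_le_sum fun a ha => Finset.sum_le_sum fun b hb => hterm a ha b hb
  have step1 : ∑ a ∈ Ico (3*q) (4*q), ∑ b ∈ range q, ((a:ℝ) - (b:ℝ))^2
      ≤ ∑ a ∈ range Mv, ∑ b ∈ range Mv, ((a:ℝ) - (b:ℝ))^2 := by
    have inner : ∀ a : ℕ, ∑ b ∈ range q, ((a:ℝ) - (b:ℝ))^2 ≤ ∑ b ∈ range Mv, ((a:ℝ) - (b:ℝ))^2 :=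
      fun a => Finset.sum_le_sum_of_subset_of_nonneg
        (Finset.range_subset_range.2 (by omega)) (fun b _ _ => sq_nonneg _)
    calc ∑ a ∈ Ico (3*q) (4*q), ∑ b ∈ range q, ((a:ℝ) - (b:ℝ))^2
        ≤ ∑ a ∈ Ico (3*q) (4*q), ∑ b ∈ range Mv, ((a:ℝ) - (b:ℝ))^2 :=
          Finset.sum_le_sum fun a _ => inner a
      _ ≤ _ := Finset.sum_le_sum_of_subset_of_nonneg
          (by intro a ha; rw [mem_Ico] at ha; rw [mem_range]; omega)
          (fun a _ _ => hnonneg _ a)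
  have hMq : (Mv:ℝ) ≤ 8*(q:ℝ) := by exact_mod_cast h8q
  have hfinal : ((Mv:ℝ))^4 / 1024 ≤ (q:ℝ) * q * (2*q)^2 := by
    have hq0 : (0:ℝ) ≤ (q:ℝ) := Nat.cast_nonneg q
    have hM0 : (0:ℝ) ≤ (Mv:ℝ) := Nat.cast_nonneg Mv
    have : ((Mv:ℝ))^4 ≤ (8*(q:ℝ))^4 := by
      exact pow_le_pow_left₀ hM0 hMq 4
    nlinarith
  linarith


end Stmt11Aux

open Stmt11Aux

set_option maxHeartbeats 1000000 in
/-- For every sufficiently large `k` there are `k` points in the unit ball of `ℝ^d`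
with pairwise distances `≥ c k^{-1/d}` whose empirical (uniform) distribution has
covariance matrix with smallest eigenvalue `≥ c`, where `c > 0` depends only on `d`.
(The smallest-eigenvalue bound is stated via the quadratic form
`v ↦ (1/k) Σ_i ⟨x_i - x̄, v⟩²` over unit vectors `v`.) -/
theorem stmt_11 (d : ℕ) (hd : 1 ≤ d) :
    ∃ c > (0:ℝ), ∃ k₀ : ℕ, ∀ k : ℕ, k₀ ≤ k →
      ∃ x : Fin k → EuclideanSpace ℝ (Fin d),
        (∀ i, ‖x i‖ ≤ 1) ∧
        (∀ i j, i ≠ j → c * (k : ℝ) ^ (-(1:ℝ)/d) ≤ ‖x i - x j‖) ∧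
        (∀ v : EuclideanSpace ℝ (Fin d), ‖v‖ = 1 →
          c ≤ ((k : ℝ))⁻¹ *
            ∑ i, (@inner ℝ _ _ (x i - ((k : ℝ))⁻¹ • ∑ j, x j) v) ^ 2) := by
  classical
  have hd' : 0 < d := hd
  have hdR : (0:ℝ) < d := by exact_mod_cast hd'
  set c : ℝ := ((2:ℝ)^(2*d+2) * 8192 * (d:ℝ)^2)⁻¹ with hcdef
  have hcpos : 0 < c := by
    rw [hcdef]
    have h1 : (0:ℝ) < (2:ℝ)^(2*d+2) := by positivity
    have h2 : (0:ℝ) < (d:ℝ)^2 := by positivity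
    have : (0:ℝ) < (2:ℝ)^(2*d+2) * 8192 * (d:ℝ)^2 := by nlinarith
    exact inv_pos.2 this
  refine ⟨c, hcpos, 2^((2*d+2)*d), ?_⟩
  intro k hk
  -- ℕ setup
  set n := Nat.findGreatest (fun n => n^d ≤ k) k with hndef
  set N := n + 1 with hNdef
  set K := N^(d-1) * (k / N^(d-1)) with hKdef
  set m := k / N^(d-1) with hmdef
  have hdpred : d - 1 + 1 = d := by omega
  have hk0 : 0 < k := lt_of_lt_of_le (Nat.pow_pos (by norm_num)) hk
  have hN0 : 0 < N := by omega
  have hPd : 0 < N^(d-1) := Nat.pow_pos hN0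
  have F1 : n^d ≤ k := by
    have := Nat.findGreatest_spec (P := fun t => t^d ≤ k) (m := 1) hk0 (by simp only [one_pow]; omega)
    simpa [← hndef] using this
  have hnk : n ≤ k := Nat.findGreatest_le k
  have F2 : k < N^d := by
    by_cases hc : n + 1 ≤ k
    · have := Nat.findGreatest_is_greatest (P := fun t => t^d ≤ k)
        (k := n + 1) (by omega) hc
      rw [hNdef]
      omega
    · have hnk2 : n = k := by omega
      have h1 : k + 1 ≤ (k+1)^d := Nat.le_self_pow (by omega) _
      rw [hNdef, hnk2]
      omega
  have F3 : 2^(2*d+2) ≤ n := by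
    have h1 : (2^(2*d+2))^d ≤ k := by rw [← pow_mul]; exact hk
    by_contra hcon
    push_neg at hcon
    have h2 : (n+1)^d ≤ (2^(2*d+2))^d := Nat.pow_le_pow_left (by omega) d
    have := lt_of_lt_of_le F2 (le_trans h2 h1)
    omega
  clear_value n
  have F5 : m < N := by
    rw [hmdef]
    rw [Nat.div_lt_iff_lt_mul hPd]
    calc k < N^d := F2
      _ = N^(d-1) * N := by rw [← pow_succ, hdpred]
      _ = N * N^(d-1) := Nat.mul_comm _ _
  have F4 : K ≤ k := by
    rw [hKdef, Nat.mul_comm]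
    exact Nat.div_mul_le_self k _
  have F7 : 2 * N^(d-1) ≤ k := by
    have hn1 : 1 ≤ n := le_trans (Nat.one_le_two_pow) F3
    have h2d : 2^d ≤ n := le_trans (Nat.pow_le_pow_right (by norm_num) (by omega)) F3
    calc 2 * N^(d-1) = 2 * (n+1)^(d-1) := by rw [hNdef]
      _ ≤ 2 * (2*n)^(d-1) := Nat.mul_le_mul_left 2 (Nat.pow_le_pow_left (by omega) _)
      _ = 2 * (2^(d-1) * n^(d-1)) := by rw [Nat.mul_pow]
      _ = (2 * 2^(d-1)) * n^(d-1) := by rw [Nat.mul_assoc]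
      _ = 2^d * n^(d-1) := by rw [← pow_succ', hdpred]
      _ ≤ n * n^(d-1) := Nat.mul_le_mul_right _ h2d
      _ = n^d := by rw [← pow_succ', hdpred]
      _ ≤ k := F1
  have mpos : 1 ≤ m := by
    rw [hmdef]
    exact (Nat.one_le_div_iff hPd).2 (by omega)
  have FK1 : k < K + N^(d-1) := by
    have h1 := Nat.div_add_mod k (N^(d-1))
    have h2 : k % (N^(d-1)) < N^(d-1) := Nat.mod_lt _ hPd
    rw [hKdef]
    omega
  have F11 : k ≤ 2*K := by
    have h1 : N^(d-1) ≤ K := by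
      rw [hKdef]
      exact Nat.le_mul_of_pos_right _ mpos
    omega
  have F8 : n < 2^(d-1) * (m+1) := by
    have h1 : k < N^(d-1) * (m+1) := by
      rw [Nat.mul_add, Nat.mul_one]
      rw [hKdef] at FK1
      exact FK1
    have h2 : n^d ≤ k := F1
    have h3 : n^d = n^(d-1) * n := by rw [← pow_succ, hdpred]
    have h4 : N^(d-1) ≤ 2^(d-1) * n^(d-1) := by
      have hn1 : 1 ≤ n := le_trans (Nat.one_le_two_pow) F3
      calc N^(d-1) = (n+1)^(d-1) := by rw [hNdef]
        _ ≤ (2*n)^(d-1) := Nat.pow_le_pow_left (by omega) _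
        _ = 2^(d-1) * n^(d-1) := Nat.mul_pow _ _ _
    have h5 : n^(d-1) * n < (2^(d-1) * n^(d-1)) * (m+1) :=
      lt_of_le_of_lt (le_of_eq h3.symm) (lt_of_le_of_lt h2
        (lt_of_lt_of_le h1 (Nat.mul_le_mul_right _ h4)))
    have h6 : n^(d-1) * n < n^(d-1) * (2^(d-1) * (m+1)) := by
      calc n^(d-1) * n < (2^(d-1) * n^(d-1)) * (m+1) := h5
        _ = n^(d-1) * (2^(d-1) * (m+1)) := by ring
    exact Nat.lt_of_mul_lt_mul_left h6
  have F9 : 8 ≤ m := by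
    have h1 : 2^(d-1) * 2^(d+3) ≤ n := by
      rw [← pow_add]
      have : d - 1 + (d + 3) = 2*d+2 := by omega
      rw [this]
      exact F3
    have h2 : 2^(d-1) * 2^(d+3) < 2^(d-1) * (m+1) := lt_of_le_of_lt h1 F8
    have h3 : 2^(d+3) < m + 1 := Nat.lt_of_mul_lt_mul_left h2
    have h4 : 16 ≤ 2^(d+3) := by
      calc (16:ℕ) = 2^4 := by norm_num
        _ ≤ 2^(d+3) := Nat.pow_le_pow_right (by norm_num) (by omega)
    omega
  have F12 : N ≤ 2^(d+1) * m := by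
    have h1 : m + 1 ≤ 2*m := by omega
    have h2 : n < 2^(d-1) * (2*m) := lt_of_lt_of_le F8 (Nat.mul_le_mul_left _ h1)
    have h3 : 2^(d-1) * (2*m) ≤ 2^d * m := by
      have h' : 2^(d-1) * 2 = 2^d := by rw [Nat.mul_comm, ← pow_succ', hdpred]
      exact le_of_eq (by rw [← h']; ring)
    have h4 : n + 1 ≤ 2^d * m := lt_of_lt_of_le h2 h3
    calc N = n + 1 := hNdef
      _ ≤ 2^d * m := h4
      _ ≤ 2^(d+1) * m := Nat.mul_le_mul_right _ (Nat.pow_le_pow_right (by norm_num) (by omega))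
  have hKNd : K ≤ N^d := le_trans F4 (le_of_lt F2)
  -- real constants
  set h : ℝ := ((d:ℝ) * (N:ℝ))⁻¹ with hhdef
  have hNR : (0:ℝ) < (N:ℝ) := by exact_mod_cast hN0
  have hhpos : 0 < h := by rw [hhdef]; positivity
  -- points
  set x : Fin k → EuclideanSpace ℝ (Fin d) :=
    fun i => (WithLp.equiv 2 (Fin d → ℝ)).symm
      (fun l => h * ((i.val / N^(l:ℕ) % N : ℕ) : ℝ)) with hxdef
  have hxl : ∀ (i : Fin k) (l : Fin d), x i l = h * ((i.val / N^(l:ℕ) % N : ℕ) : ℝ) :=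
    fun i l => rfl
  have hdigN : ∀ (a : ℕ) (l : ℕ), a / N^l % N < N := fun a l => Nat.mod_lt _ hN0
  refine ⟨x, ?_, ?_, ?_⟩
  · -- norms
    intro i
    rw [EuclideanSpace.norm_eq]
    have hcoord : ∀ l : Fin d, ‖x i l‖^2 ≤ ((d:ℝ)⁻¹)^2 := by
      intro l
      rw [hxl]
      have h1 : ((i.val / N^(l:ℕ) % N : ℕ) : ℝ) ≤ (N:ℝ) := by
        exact_mod_cast le_of_lt (hdigN i.val l)
      have h2 : (0:ℝ) ≤ ((i.val / N^(l:ℕ) % N : ℕ) : ℝ) := Nat.cast_nonneg _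
      have h3 : ‖h * ((i.val / N^(l:ℕ) % N : ℕ) : ℝ)‖ = h * ((i.val / N^(l:ℕ) % N : ℕ) : ℝ) := by
        rw [Real.norm_eq_abs, abs_of_nonneg (by positivity)]
      rw [h3]
      have h4 : h * ((i.val / N^(l:ℕ) % N : ℕ) : ℝ) ≤ h * (N:ℝ) :=
        mul_le_mul_of_nonneg_left h1 (le_of_lt hhpos)
      have h5 : h * (N:ℝ) = (d:ℝ)⁻¹ := by
        rw [hhdef]
        field_simp
      have h6 : (0:ℝ) ≤ h * ((i.val / N^(l:ℕ) % N : ℕ) : ℝ) := by positivity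
      rw [← h5] at *
      exact pow_le_pow_left₀ h6 h4 2
    have hsum : ∑ l : Fin d, ‖x i l‖^2 ≤ 1 := by
      calc ∑ l : Fin d, ‖x i l‖^2 ≤ ∑ _l : Fin d, ((d:ℝ)⁻¹)^2 :=
            Finset.sum_le_sum fun l _ => hcoord l
        _ = (d:ℝ) * ((d:ℝ)⁻¹)^2 := by
            rw [Finset.sum_const, Finset.card_univ, Fintype.card_fin, nsmul_eq_mul]
        _ = (d:ℝ)⁻¹ := by field_simp
        _ ≤ 1 := by
            rw [inv_le_one_iff₀]
            right
            exact_mod_cast hd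
    calc Real.sqrt (∑ l, ‖x i l‖^2) ≤ Real.sqrt 1 := Real.sqrt_le_sqrt hsum
      _ = 1 := Real.sqrt_one
  · -- separation
    intro i j hij
    -- digits differ somewhere
    have hdig : ∃ l : Fin d, (i.val / N^(l:ℕ) % N) ≠ (j.val / N^(l:ℕ) % N) := by
      by_contra hno
      push_neg at hno
      have hiN : i.val < N^d := lt_of_lt_of_le i.isLt (le_of_lt F2)
      have hjN : j.val < N^d := lt_of_lt_of_le j.isLt (le_of_lt F2)
      have h1 := value_digits N hN0 d i.val hiN
      have h2 := value_digits N hN0 d j.val hjN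
      have h3 : ∑ l ∈ range d, (i.val / N^l % N) * N^l
          = ∑ l ∈ range d, (j.val / N^l % N) * N^l := by
        refine Finset.sum_congr rfl fun l hl => ?_
        rw [mem_range] at hl
        have := hno ⟨l, hl⟩
        simp only at this
        rw [this]
      exact hij (Fin.ext (by omega))
    obtain ⟨l, hl⟩ := hdig
    -- coordinate lower bound for the norm
    have coord_le : |(x i - x j) l| ≤ ‖x i - x j‖ := by
      rw [EuclideanSpace.norm_eq]
      have h1 : |(x i - x j) l| = Real.sqrt (‖(x i - x j) l‖^2) := by
        rw [Real.sqrt_sq_eq_abs, Real.norm_eq_abs, abs_abs]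
      rw [h1]
      refine Real.sqrt_le_sqrt ?_
      exact Finset.single_le_sum (fun l' _ => sq_nonneg (‖(x i - x j) l'‖)) (mem_univ l)
    have happly : (x i - x j) l = x i l - x j l := rfl
    have habs : h ≤ |(x i - x j) l| := by
      rw [happly, hxl, hxl]
      have habs1 : ∀ a b : ℕ, a ≠ b → (1:ℝ) ≤ |(a:ℝ) - (b:ℝ)| := by
        intro a b hab
        rcases Nat.lt_or_ge a b with hcase | hcase
        · have h1 : (a:ℝ) + 1 ≤ b := by exact_mod_cast hcase
          rw [abs_sub_comm, abs_of_nonneg (by linarith)]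
          linarith
        · have hlt : b < a := by omega
          have h1 : (b:ℝ) + 1 ≤ a := by exact_mod_cast hlt
          rw [abs_of_nonneg (by linarith)]
          linarith
      have hint : (1:ℝ) ≤ |((i.val / N^(l:ℕ) % N : ℕ):ℝ) - ((j.val / N^(l:ℕ) % N : ℕ):ℝ)| :=
        habs1 _ _ hl
      calc h = h * 1 := (mul_one h).symm
        _ ≤ h * |((i.val / N^(l:ℕ) % N : ℕ):ℝ) - ((j.val / N^(l:ℕ) % N : ℕ):ℝ)| :=
            mul_le_mul_of_nonneg_left hint (le_of_lt hhpos)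
        _ = |h * ((i.val / N^(l:ℕ) % N : ℕ):ℝ) - h * ((j.val / N^(l:ℕ) % N : ℕ):ℝ)| := by
            rw [← mul_sub, abs_mul, abs_of_pos hhpos]
    -- rpow bound : c * k^(-1/d) ≤ h
    have hrpow : c * (k:ℝ) ^ (-(1:ℝ)/d) ≤ h := by
      have hkR : (0:ℝ) < (k:ℝ) := by exact_mod_cast hk0
      have hnR : (0:ℝ) < (n:ℝ) := by
        have : (1:ℕ) ≤ n := le_trans Nat.one_le_two_pow F3
        exact_mod_cast this
      have hnd : ((n:ℝ))^(d:ℕ) ≤ (k:ℝ) := by exact_mod_cast F1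
      have hroot : (n:ℝ) ≤ (k:ℝ) ^ ((1:ℝ)/d) := by
        have h1 : ((n:ℝ)^(d:ℕ) : ℝ) ^ ((1:ℝ)/d) ≤ (k:ℝ) ^ ((1:ℝ)/d) :=
          Real.rpow_le_rpow (by positivity) hnd (by positivity)
        have h2 : ((n:ℝ)^(d:ℕ) : ℝ) ^ ((1:ℝ)/d) = (n:ℝ) := by
          rw [← Real.rpow_natCast (n:ℝ) d, ← Real.rpow_mul (le_of_lt hnR)]
          rw [mul_one_div, div_self (by exact_mod_cast hd'.ne' : (d:ℝ) ≠ 0), Real.rpow_one]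
        rwa [h2] at h1
      have hneg : (k:ℝ) ^ (-(1:ℝ)/d) = ((k:ℝ) ^ ((1:ℝ)/d))⁻¹ := by
        rw [neg_div, Real.rpow_neg (le_of_lt hkR)]
      have hrpos : (0:ℝ) < (k:ℝ) ^ ((1:ℝ)/d) := Real.rpow_pos_of_pos hkR _
      have hinv : ((k:ℝ) ^ ((1:ℝ)/d))⁻¹ ≤ (n:ℝ)⁻¹ :=
        inv_anti₀ hnR hroot
      have hc2d : c ≤ (2*(d:ℝ))⁻¹ := by
        rw [hcdef]
        have h1 : (0:ℝ) < 2*(d:ℝ) := by positivity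
        have h2 : (2:ℝ)^(2*d+2) * 8192 * (d:ℝ)^2 ≥ 2*(d:ℝ) := by
          have h3 : (1:ℝ) ≤ (2:ℝ)^(2*d+2) := one_le_pow₀ (by norm_num)
          have h4 : (1:ℝ) ≤ (d:ℝ) := by exact_mod_cast hd
          nlinarith
        exact inv_anti₀ h1 h2
      have hh2 : (2*(d:ℝ))⁻¹ * (n:ℝ)⁻¹ ≤ h := by
        have hn1 : 1 ≤ n := le_trans Nat.one_le_two_pow F3
        have hNn : (N:ℝ) ≤ 2*(n:ℝ) := by
          have hNn' : N ≤ 2*n := by omega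
          exact_mod_cast hNn'
        have hdN : (0:ℝ) < (d:ℝ)*(N:ℝ) := mul_pos hdR hNR
        have hle : (d:ℝ)*(N:ℝ) ≤ (2*(d:ℝ))*(n:ℝ) := by nlinarith
        rw [hhdef, ← mul_inv]
        exact inv_anti₀ hdN hle
      have hknn : (0:ℝ) ≤ (k:ℝ) ^ (-(1:ℝ)/d) := Real.rpow_nonneg (le_of_lt hkR) _
      have s1 : c * (k:ℝ) ^ (-(1:ℝ)/d) ≤ (2*(d:ℝ))⁻¹ * (k:ℝ) ^ (-(1:ℝ)/d) :=
        mul_le_mul_of_nonneg_right hc2d hknn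
      have s2 : (2*(d:ℝ))⁻¹ * (k:ℝ) ^ (-(1:ℝ)/d) ≤ (2*(d:ℝ))⁻¹ * (n:ℝ)⁻¹ := by
        rw [hneg]
        exact mul_le_mul_of_nonneg_left hinv (by positivity)
      linarith
    calc c * (k:ℝ) ^ (-(1:ℝ)/d) ≤ h := hrpow
      _ ≤ |(x i - x j) l| := habs
      _ ≤ ‖x i - x j‖ := coord_le
  · -- covariance
    intro v hv
    have hkR : (0:ℝ) < (k:ℝ) := by exact_mod_cast hk0
    have hvsum : ∑ l, (v l)^2 = 1 := by
      rw [EuclideanSpace.norm_eq] at hv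
      have h2 : ∑ l, ‖v l‖^2 = 1 := by
        have h3 := congrArg (fun t => t^2) hv
        simp only [one_pow] at h3
        rw [Real.sq_sqrt (Finset.sum_nonneg fun l _ => sq_nonneg _)] at h3
        exact h3
      simpa [Real.norm_eq_abs, sq_abs] using h2
    -- grid data
    set M : Fin d → ℕ := fun l => if (l:ℕ) = d - 1 then m else N with hMdef
    set Φ : ℕ → (Fin d → ℕ) := fun a l => a / N^(l:ℕ) % N with hΦdef
    set Ψ : (Fin d → ℕ) → ℕ :=
      fun g => ∑ l ∈ range d, (if hl : l < d then g ⟨l, hl⟩ else 0) * N^l with hΨdef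
    set zf : (Fin d → ℕ) → ℝ := fun g => ∑ l, (h * (g l : ℝ)) * v l with hzfdef
    set Z : ℕ → ℝ := fun a => zf (Φ a) with hZdef
    set zz : Fin k → ℝ := fun i => Z i.val with hzzdef
    have ltop : Fin d := ⟨d-1, by omega⟩
    have hMm : ∀ l : Fin d, m ≤ M l := by
      intro l
      show m ≤ if (l:ℕ) = d - 1 then m else N
      split
      · exact le_refl m
      · exact le_of_lt F5
    have hMN : ∀ l : Fin d, M l ≤ N := by
      intro l
      show (if (l:ℕ) = d - 1 then m else N) ≤ N
      split
      · exact le_of_lt F5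
      · exact le_refl N
    have hMtop : M ⟨d-1, by omega⟩ = m := by
      show (if ((⟨d-1, by omega⟩ : Fin d):ℕ) = d - 1 then m else N) = m
      simp
    have hprodM : ∏ l, M l = K := by
      rw [← Finset.mul_prod_erase univ M (mem_univ (⟨d-1, by omega⟩ : Fin d)), hMtop]
      have herase : ∏ l ∈ univ.erase (⟨d-1, by omega⟩ : Fin d), M l = N^(d-1) := by
        have hcongr : ∀ l ∈ univ.erase (⟨d-1, by omega⟩ : Fin d), M l = N := by
          intro l hl
          have hne := Finset.ne_of_mem_erase hl
          have hlv : (l:ℕ) ≠ d - 1 := by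
            intro hcon
            exact hne (Fin.ext hcon)
          show (if (l:ℕ) = d - 1 then m else N) = N
          rw [if_neg hlv]
        rw [Finset.prod_congr rfl hcongr, Finset.prod_const,
          Finset.card_erase_of_mem (mem_univ _), Finset.card_univ, Fintype.card_fin]
      rw [herase, hKdef]
      ring
    have hprodMR : ∏ l, (M l : ℝ) = (K:ℝ) := by
      rw [← Nat.cast_prod, hprodM]
    -- membership facts
    have hgbound : ∀ g ∈ Fintype.piFinset (fun l => range (M l)), ∀ l : Fin d, g l < M l := by
      intro g hg l
      have := (Fintype.mem_piFinset.1 hg) l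
      rwa [mem_range] at this
    have hPhimem : ∀ a ∈ range K, Φ a ∈ Fintype.piFinset (fun l => range (M l)) := by
      intro a ha
      rw [mem_range] at ha
      rw [Fintype.mem_piFinset]
      intro l
      rw [mem_range]
      show a / N^(l:ℕ) % N < M l
      by_cases hcase : (l:ℕ) = d - 1
      · have h1 : a / N^(d-1) < m := by
          rw [Nat.div_lt_iff_lt_mul hPd]
          calc a < K := ha
            _ = m * N^(d-1) := by rw [hKdef]; ring
        have h2 : a / N^(d-1) < N := lt_trans h1 F5
        have hMl : M l = m := by
          show (if (l:ℕ) = d - 1 then m else N) = m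
          rw [if_pos hcase]
        rw [hMl, hcase, Nat.mod_eq_of_lt h2]
        exact h1
      · have hMl : M l = N := by
          show (if (l:ℕ) = d - 1 then m else N) = N
          rw [if_neg hcase]
        rw [hMl]
        exact hdigN a _
    have hPsimem : ∀ g ∈ Fintype.piFinset (fun l => range (M l)), Ψ g ∈ range K := by
      intro g hg
      rw [mem_range]
      show (∑ l ∈ range d, (if hl : l < d then g ⟨l, hl⟩ else 0) * N^l) < K
      have hrange : range d = range ((d-1)+1) := by rw [hdpred]
      rw [hrange, Finset.sum_range_succ]
      have hA : ∑ l ∈ range (d-1), (if hl : l < d then g ⟨l, hl⟩ else 0) * N^l < N^(d-1) := by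
        refine value_lt N hN0 (d-1) _ ?_
        intro l hld
        have hld' : l < d := by omega
        rw [dif_pos hld']
        exact lt_of_lt_of_le (hgbound g hg ⟨l, hld'⟩) (hMN _)
      have hB : (if hl : d-1 < d then g ⟨d-1, hl⟩ else 0) < m := by
        rw [dif_pos (by omega : d-1 < d)]
        have := hgbound g hg ⟨d-1, by omega⟩
        rwa [hMtop] at this
      have e1 : (if hl : d-1 < d then g ⟨d-1, hl⟩ else 0) * N^(d-1) ≤ (m-1) * N^(d-1) :=
        Nat.mul_le_mul_right _ (by omega)
      have e2 : N^(d-1) + (m-1) * N^(d-1) = K := by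
        rw [hKdef]
        have hm' : m = (m-1)+1 := by omega
        calc N^(d-1) + (m-1) * N^(d-1) = ((m-1)+1) * N^(d-1) := by ring
          _ = m * N^(d-1) := by rw [← hm']
          _ = N^(d-1) * m := Nat.mul_comm _ _
      calc (∑ l ∈ range (d-1), (if hl : l < d then g ⟨l, hl⟩ else 0) * N^l)
            + (if hl : d-1 < d then g ⟨d-1, hl⟩ else 0) * N^(d-1)
          < N^(d-1) + (m-1) * N^(d-1) := add_lt_add_of_lt_of_le hA e1
        _ = K := e2
    have hleft : ∀ a ∈ range K, Ψ (Φ a) = a := by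
      intro a ha
      rw [mem_range] at ha
      have haN : a < N^d := lt_of_lt_of_le ha (le_trans F4 (le_of_lt F2))
      show (∑ l ∈ range d, (if hl : l < d then Φ a ⟨l, hl⟩ else 0) * N^l) = a
      have hcongr : ∀ l ∈ range d,
          (if hl : l < d then Φ a ⟨l, hl⟩ else 0) * N^l = (a / N^l % N) * N^l := by
        intro l hl
        rw [mem_range] at hl
        rw [dif_pos hl]
      rw [Finset.sum_congr rfl hcongr]
      exact value_digits N hN0 d a haN
    have hright : ∀ g ∈ Fintype.piFinset (fun l => range (M l)), Φ (Ψ g) = g := by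
      intro g hg
      funext l
      have hbound : ∀ l', l' < d → (if hl : l' < d then g ⟨l', hl⟩ else 0) < N := by
        intro l' hl'
        rw [dif_pos hl']
        exact lt_of_lt_of_le (hgbound g hg _) (hMN _)
      have hdv := digits_value N hN0 d
        (fun l' => if hl : l' < d then g ⟨l', hl⟩ else 0) hbound (l:ℕ) l.isLt
      show Ψ g / N^(l:ℕ) % N = g l
      have hΨg : Ψ g = ∑ l' ∈ range d, (if hl : l' < d then g ⟨l', hl⟩ else 0) * N^l' := rfl
      rw [hΨg, hdv, dif_pos l.isLt]
    -- sum conversions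
    have conv1 : ∑ i : Fin k, ∑ j : Fin k, (zz i - zz j)^2
        = ∑ i ∈ range k, ∑ j ∈ range k, (Z i - Z j)^2 := by
      calc ∑ i : Fin k, ∑ j : Fin k, (zz i - zz j)^2
          = ∑ i : Fin k, ∑ j ∈ range k, (Z i.val - Z j)^2 :=
            Finset.sum_congr rfl fun i _ =>
              Fin.sum_univ_eq_sum_range (fun b => (Z i.val - Z b)^2) k
        _ = ∑ i ∈ range k, ∑ j ∈ range k, (Z i - Z j)^2 :=
            Fin.sum_univ_eq_sum_range (fun a => ∑ j ∈ range k, (Z a - Z j)^2) k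
    have conv2 : ∑ i ∈ range K, ∑ j ∈ range K, (Z i - Z j)^2
        ≤ ∑ i ∈ range k, ∑ j ∈ range k, (Z i - Z j)^2 := by
      have hsub : range K ⊆ range k := Finset.range_subset_range.2 F4
      calc ∑ i ∈ range K, ∑ j ∈ range K, (Z i - Z j)^2
          ≤ ∑ i ∈ range K, ∑ j ∈ range k, (Z i - Z j)^2 :=
            Finset.sum_le_sum fun i _ =>
              Finset.sum_le_sum_of_subset_of_nonneg hsub (fun _ _ _ => sq_nonneg _)
        _ ≤ ∑ i ∈ range k, ∑ j ∈ range k, (Z i - Z j)^2 :=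
            Finset.sum_le_sum_of_subset_of_nonneg hsub
              (fun i _ _ => Finset.sum_nonneg fun j _ => sq_nonneg _)
    have conv3 : ∑ i ∈ range K, ∑ j ∈ range K, (Z i - Z j)^2
        = ∑ g ∈ Fintype.piFinset (fun l => range (M l)), ∑ g' ∈ Fintype.piFinset (fun l => range (M l)), (zf g - zf g')^2 := by
      have houter : ∑ i ∈ range K, ∑ j ∈ range K, (Z i - Z j)^2
          = ∑ g ∈ Fintype.piFinset (fun l => range (M l)), ∑ j ∈ range K, (zf g - Z j)^2 :=
        Finset.sum_nbij' Φ Ψ hPhimem hPsimem hleft hright (fun a ha => rfl)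
      rw [houter]
      exact Finset.sum_congr rfl fun g hg =>
        Finset.sum_nbij' Φ Ψ hPhimem hPsimem hleft hright (fun a ha => rfl)
    have conv4 : ∑ g ∈ Fintype.piFinset (fun l => range (M l)), ∑ g' ∈ Fintype.piFinset (fun l => range (M l)), (zf g - zf g')^2
        = ∑ g ∈ Fintype.piFinset (fun l => range (M l)), ∑ g' ∈ Fintype.piFinset (fun l => range (M l)),
            (∑ l, ((g l : ℝ) - (g' l : ℝ)) * (h * v l))^2 := by
      refine Finset.sum_congr rfl fun g _ => Finset.sum_congr rfl fun g' _ => ?_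
      congr 1
      show (∑ l, (h * (g l : ℝ)) * v l) - (∑ l, (h * (g' l : ℝ)) * v l) = _
      rw [← Finset.sum_sub_distrib]
      exact Finset.sum_congr rfl fun l _ => by ring
    have hgps := grid_pair_sum M (fun l => h * v l)
    simp only [] at hgps
    -- per-coordinate lower bound
    have hperl : ∀ l : Fin d,
        ((K:ℝ)^2 * (m:ℝ)^2 / 1024) * (h * v l)^2
          ≤ (∏ l' ∈ univ.erase l, (M l' : ℝ))^2 *
              (∑ a ∈ range (M l), ∑ b ∈ range (M l), ((a:ℝ)-(b:ℝ))^2) * (h * v l)^2 := by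
      intro l
      refine mul_le_mul_of_nonneg_right ?_ (sq_nonneg _)
      have hEM : (∏ l' ∈ univ.erase l, (M l' : ℝ)) * (M l : ℝ) = (K:ℝ) := by
        rw [← hprodMR, ← Finset.mul_prod_erase univ (fun l' => (M l' : ℝ)) (mem_univ l)]
        ring
      have hD := range_pair_sq_lb (M l) (le_trans F9 (hMm l))
      have hE0 : (0:ℝ) ≤ ∏ l' ∈ univ.erase l, (M l' : ℝ) :=
        Finset.prod_nonneg fun _ _ => Nat.cast_nonneg _
      have hmM : (m:ℝ) ≤ (M l : ℝ) := by exact_mod_cast hMm l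
      have hm0 : (0:ℝ) ≤ (m:ℝ) := Nat.cast_nonneg _
      have e1 : (K:ℝ)^2 * (m:ℝ)^2 ≤ (K:ℝ)^2 * (M l:ℝ)^2 :=
        mul_le_mul_of_nonneg_left (by nlinarith) (sq_nonneg _)
      have e2 : (K:ℝ)^2 * (M l:ℝ)^2 = (∏ l' ∈ univ.erase l, (M l' : ℝ))^2 * (M l:ℝ)^4 := by
        rw [← hEM]
        ring
      have e3 : (∏ l' ∈ univ.erase l, (M l' : ℝ))^2 * ((M l:ℝ)^4/1024)
          ≤ (∏ l' ∈ univ.erase l, (M l' : ℝ))^2 *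
              (∑ a ∈ range (M l), ∑ b ∈ range (M l), ((a:ℝ)-(b:ℝ))^2) :=
        mul_le_mul_of_nonneg_left hD (sq_nonneg _)
      nlinarith [e1, e2, e3]
    have hvhsum : ∑ l, (h * v l)^2 = h^2 := by
      have : ∀ l : Fin d, (h * v l)^2 = h^2 * (v l)^2 := fun l => by ring
      rw [Finset.sum_congr rfl fun l _ => this l, ← Finset.mul_sum, hvsum, mul_one]
    have hsum_lb : ((K:ℝ)^2 * (m:ℝ)^2 / 1024) * h^2
        ≤ ∑ l, (∏ l' ∈ univ.erase l, (M l' : ℝ))^2 *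
            (∑ a ∈ range (M l), ∑ b ∈ range (M l), ((a:ℝ)-(b:ℝ))^2) * (h * v l)^2 := by
      calc ((K:ℝ)^2 * (m:ℝ)^2 / 1024) * h^2
          = ∑ l, ((K:ℝ)^2 * (m:ℝ)^2 / 1024) * (h * v l)^2 := by
            rw [← Finset.mul_sum, hvhsum]
        _ ≤ _ := Finset.sum_le_sum fun l _ => hperl l
    -- chain everything
    have hchain : ((K:ℝ)^2 * (m:ℝ)^2 / 1024) * h^2 ≤ ∑ i : Fin k, ∑ j : Fin k, (zz i - zz j)^2 := by
      calc ((K:ℝ)^2 * (m:ℝ)^2 / 1024) * h^2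
          ≤ ∑ l, (∏ l' ∈ univ.erase l, (M l' : ℝ))^2 *
              (∑ a ∈ range (M l), ∑ b ∈ range (M l), ((a:ℝ)-(b:ℝ))^2) * (h * v l)^2 := hsum_lb
        _ = ∑ g ∈ Fintype.piFinset (fun l => range (M l)), ∑ g' ∈ Fintype.piFinset (fun l => range (M l)),
              (∑ l, ((g l : ℝ) - (g' l : ℝ)) * (h * v l))^2 := hgps.symm
        _ = ∑ i ∈ range K, ∑ j ∈ range K, (Z i - Z j)^2 := by rw [conv3, conv4]
        _ ≤ ∑ i ∈ range k, ∑ j ∈ range k, (Z i - Z j)^2 := conv2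
        _ = ∑ i : Fin k, ∑ j : Fin k, (zz i - zz j)^2 := conv1.symm
    -- rewrite goal via inner products
    have hinner : ∀ i : Fin k,
        (@inner ℝ _ _ (x i - ((k:ℝ))⁻¹ • ∑ j, x j) v) = zz i - (k:ℝ)⁻¹ * ∑ j, zz j := by
      intro i
      have hone : ∀ p : Fin k, (@inner ℝ _ _ (x p) v) = zz p := by
        intro p
        rw [PiLp.inner_apply]
        simp only [RCLike.inner_apply, conj_trivial]
        show (∑ l : Fin d, (v l) * (x p l))
            = ∑ l : Fin d, (h * ((p.val / N^(l:ℕ) % N : ℕ) : ℝ)) * v l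
        exact Finset.sum_congr rfl fun l _ => by rw [hxl]; ring
      rw [inner_sub_left, real_inner_smul_left, sum_inner, hone i,
        Finset.sum_congr rfl fun p _ => hone p]
    simp_rw [hinner]
    -- final numeric bound
    have hpair := pair_sum_identity hk0 zz
    have hceq : c * ((2:ℝ)^(2*d+2) * 8192 * (d:ℝ)^2) = 1 := by
      rw [hcdef]
      refine inv_mul_cancel₀ ?_
      have h1 : (0:ℝ) < (2:ℝ)^(2*d+2) * 8192 * (d:ℝ)^2 :=
        mul_pos (mul_pos (by positivity) (by norm_num)) (pow_pos hdR 2)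
      exact h1.ne'
    have hkK : (k:ℝ) ≤ 2*(K:ℝ) := by exact_mod_cast F11
    have hNm : (N:ℝ) ≤ (2:ℝ)^(d+1)*(m:ℝ) := by exact_mod_cast F12
    have hKR : (0:ℝ) ≤ (K:ℝ) := Nat.cast_nonneg _
    have hk2 : (k:ℝ)^2 ≤ 4*(K:ℝ)^2 := by
      have h1 : (k:ℝ)^2 ≤ (2*(K:ℝ))^2 := pow_le_pow_left₀ hkR.le hkK 2
      exact h1.trans_eq (by ring)
    have hN2 : (N:ℝ)^2 ≤ (2:ℝ)^(2*d+2) * (m:ℝ)^2 := by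
      have h1 : (N:ℝ)^2 ≤ ((2:ℝ)^(d+1)*(m:ℝ))^2 := pow_le_pow_left₀ (Nat.cast_nonneg N) hNm 2
      have h2 : ((2:ℝ)^(d+1)*(m:ℝ))^2 = (2:ℝ)^(2*d+2)*(m:ℝ)^2 := by
        rw [mul_pow, ← pow_mul, show (d+1)*2 = 2*d+2 from by ring]
      exact h1.trans_eq h2
    have hfac : (k:ℝ)^2*(N:ℝ)^2 ≤ (4*(K:ℝ)^2)*((2:ℝ)^(2*d+2)*(m:ℝ)^2) := by
      refine mul_le_mul hk2 hN2 (sq_nonneg _) (by positivity)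
    have hcn : (0:ℝ) ≤ c * 2048 * (d:ℝ)^2 := by positivity
    have step2 : (c * 2048 * (d:ℝ)^2) * ((k:ℝ)^2*(N:ℝ)^2)
        ≤ (c * 2048 * (d:ℝ)^2) * ((4*(K:ℝ)^2)*((2:ℝ)^(2*d+2)*(m:ℝ)^2)) :=
      mul_le_mul_of_nonneg_left hfac hcn
    have heq2 : (c * 2048 * (d:ℝ)^2) * ((4*(K:ℝ)^2)*((2:ℝ)^(2*d+2)*(m:ℝ)^2))
        = (c * ((2:ℝ)^(2*d+2) * 8192 * (d:ℝ)^2)) * ((K:ℝ)^2*(m:ℝ)^2) := by ring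
    have hmain : c * (2*(k:ℝ)^2) * (1024*((d:ℝ)*(N:ℝ))^2) ≤ (K:ℝ)^2*(m:ℝ)^2 := by
      have heq3 : c * (2*(k:ℝ)^2) * (1024*((d:ℝ)*(N:ℝ))^2)
          = (c * 2048 * (d:ℝ)^2) * ((k:ℝ)^2*(N:ℝ)^2) := by ring
      rw [heq3]
      calc (c * 2048 * (d:ℝ)^2) * ((k:ℝ)^2*(N:ℝ)^2)
          ≤ (c * 2048 * (d:ℝ)^2) * ((4*(K:ℝ)^2)*((2:ℝ)^(2*d+2)*(m:ℝ)^2)) := step2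
        _ = (c * ((2:ℝ)^(2*d+2) * 8192 * (d:ℝ)^2)) * ((K:ℝ)^2*(m:ℝ)^2) := heq2
        _ = (K:ℝ)^2*(m:ℝ)^2 := by rw [hceq, one_mul]
    -- assemble: goal c ≤ k⁻¹ * Σ (zz i − k⁻¹ Σ zz)^2
    have hdN2pos : (0:ℝ) < 1024*((d:ℝ)*(N:ℝ))^2 := by
      have := mul_pos hdR hNR
      positivity
    have hQeq : (k:ℝ)⁻¹ * (∑ i, (zz i - (k:ℝ)⁻¹ * ∑ j, zz j)^2)
        = (∑ i, ∑ j, (zz i - zz j)^2) / (2*(k:ℝ)^2) := by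
      rw [hpair]
      field_simp
    rw [hQeq, le_div_iff₀ (by positivity : (0:ℝ) < 2*(k:ℝ)^2)]
    have hh2eq : (K:ℝ)^2*(m:ℝ)^2/1024 * h^2 = ((K:ℝ)^2*(m:ℝ)^2) / (1024*((d:ℝ)*(N:ℝ))^2) := by
      rw [hhdef]
      rw [div_mul_eq_mul_div, inv_pow, ← div_eq_mul_inv, div_div]
      congr 1
      ring
    have hcore : c * (2*(k:ℝ)^2) ≤ (K:ℝ)^2*(m:ℝ)^2/1024 * h^2 := by
      rw [hh2eq, le_div_iff₀ hdN2pos]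
      exact hmain
    calc c * (2*(k:ℝ)^2) ≤ (K:ℝ)^2*(m:ℝ)^2/1024 * h^2 := hcore
      _ ≤ ∑ i : Fin k, ∑ j : Fin k, (zz i - zz j)^2 := hchain
end

section
/- Let {x_1,...,x_k} ⊂ ℝ^d satisfy ||x_i - x_j|| ≥ r for all i ≠ j, and let {y_1,...,y_k} be the image of {x_1,...,x_k} under an isometry of ℝ^d. Then there exists a bijection f from {y_1,...,y_k} to {x_1,...,x_k} such that for every i, j, ||x_j - y_i|| ≥ (r/3) whenever x_j ≠ f(y_i); equivalently, ||x - y|| ≥ (r/3) 1{x ≠ f(y)} for all x ∈ {x_1,...,x_k} and y ∈ {y_1,...,y_k}. -/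
/-- If `x_1, …, x_k ∈ ℝ^d` are `r`-separated and `y_i = U x_i` for an isometry `U`
of `ℝ^d`, then there is a bijection (permutation of indices) `σ` matching the two
point sets such that `‖x_j - y_i‖ ≥ r/3` whenever `x_j` is not the point matched
to `y_i`. -/
theorem stmt_12 {d k : ℕ} (r : ℝ) (hr : 0 < r)
    (x : Fin k → EuclideanSpace ℝ (Fin d))
    (hsep : ∀ i j, i ≠ j → r ≤ ‖x i - x j‖)
    (U : EuclideanSpace ℝ (Fin d) ≃ᵢ EuclideanSpace ℝ (Fin d)) :
    ∃ σ : Equiv.Perm (Fin k),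
      ∀ i j, j ≠ σ i → r / 3 ≤ ‖x j - U (x i)‖ := by
  classical
  set y : Fin k → EuclideanSpace ℝ (Fin d) := fun i => U (x i) with hy
  have hysep : ∀ i j, i ≠ j → r ≤ ‖y i - y j‖ := by
    intro i j hij
    have : ‖y i - y j‖ = ‖x i - x j‖ := by
      simp only [hy]
      rw [← dist_eq_norm, ← dist_eq_norm, U.isometry.dist_eq]
    rw [this]; exact hsep i j hij
  set P : Fin k → Fin k → Prop := fun i j => ‖x j - y i‖ < r / 3 with hP
  -- uniqueness of j
  have huj : ∀ i j j', P i j → P i j' → j = j' := by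
    intro i j j' h1 h2
    by_contra hne
    have h3 : ‖x j - x j'‖ ≤ ‖x j - y i‖ + ‖x j' - y i‖ := by
      have := norm_sub_le_norm_sub_add_norm_sub (x j) (y i) (x j')
      calc ‖x j - x j'‖ ≤ ‖x j - y i‖ + ‖y i - x j'‖ := this
        _ = ‖x j - y i‖ + ‖x j' - y i‖ := by rw [norm_sub_rev (y i)]
    have := hsep j j' hne
    linarith
  -- uniqueness of i
  have hui : ∀ i i' j, P i j → P i' j → i = i' := by
    intro i i' j h1 h2
    by_contra hne
    have h3 : ‖y i - y i'‖ ≤ ‖x j - y i‖ + ‖x j - y i'‖ := by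
      calc ‖y i - y i'‖ ≤ ‖y i - x j‖ + ‖x j - y i'‖ :=
            norm_sub_le_norm_sub_add_norm_sub _ _ _
        _ = ‖x j - y i‖ + ‖x j - y i'‖ := by rw [norm_sub_rev]
    have := hysep i i' hne
    linarith
  set p : Fin k → Prop := fun i => ∃ j, P i j with hp
  set q : Fin k → Prop := fun j => ∃ i, P i j with hq
  let e : {i // p i} ≃ {j // q j} :=
    { toFun := fun i => ⟨i.2.choose, ⟨i.1, i.2.choose_spec⟩⟩
      invFun := fun j => ⟨j.2.choose, ⟨j.1, j.2.choose_spec⟩⟩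
      left_inv := by
        rintro ⟨i, hi⟩
        apply Subtype.ext
        exact hui _ i _ (⟨i, hi.choose_spec⟩ : q hi.choose).choose_spec hi.choose_spec
      right_inv := by
        rintro ⟨j, hj⟩
        apply Subtype.ext
        exact huj _ _ j (⟨j, hj.choose_spec⟩ : p hj.choose).choose_spec hj.choose_spec }
  have hcard : Fintype.card {i // ¬ p i} = Fintype.card {j // ¬ q j} := by
    have h1 : Fintype.card {i // p i} = Fintype.card {j // q j} := Fintype.card_congr e
    rw [Fintype.card_subtype_compl, Fintype.card_subtype_compl, h1]
  obtain ⟨e'⟩ : Nonempty ({i // ¬ p i} ≃ {j // ¬ q j}) := ⟨Fintype.equivOfCardEq hcard⟩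
  refine ⟨((Equiv.sumCompl p).symm.trans ((Equiv.sumCongr e e').trans
      (Equiv.sumCompl q))), ?_⟩
  intro i j hne
  by_contra hlt
  push_neg at hlt
  have hPij : P i j := hlt
  have hpi : p i := ⟨j, hPij⟩
  apply hne
  have h1 : (Equiv.sumCompl p).symm i = Sum.inl ⟨i, hpi⟩ :=
    Equiv.sumCompl_symm_apply_of_pos (p := p) hpi
  simp only [Equiv.trans_apply, h1, Equiv.sumCongr_apply, Sum.map_inl,
    Equiv.sumCompl_apply_inl]
  exact huj i j _ hPij hpi.choose_spec
end

section
/- Let X_1, ..., X_n be i.i.d. mean-zero random vectors in ℝ^d with E[||X_1||^4] < ∞, and let X̄_n denote the sample mean. Then E[ | (1/n)Σ_i ||X_i||^4 - (1/n)Σ_i ||X_i - X̄_n||^4 | ] ≤ C n^{-1/2}, where C depends only on E[||X_1||^4]. -/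
open MeasureTheory ProbabilityTheory Finset
open scoped BigOperators RealInnerProductSpace

lemma aux_half (a b h : ℝ) (ha : 0 ≤ a) (hb : 0 ≤ b) (hh : 0 ≤ h)
    (hab : b - a ≤ h) (hba : b ≤ a + h) : b^4 - a^4 ≤ 16*(a^3*h) + 16*h^4 := by
  rcases le_or_gt b a with hle | hlt
  · nlinarith [pow_le_pow_left₀ hb hle 4, mul_nonneg (mul_nonneg (mul_nonneg ha ha) ha) hh,
      pow_nonneg hh 4]
  · have h1 : b^4 - a^4 ≤ 4*(b^3*h) := by
      nlinarith [mul_le_mul_of_nonneg_right hab (by nlinarith : (0:ℝ) ≤ b^3 + b^2*a + b*a^2 + a^3),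
        mul_nonneg hh (by nlinarith : (0:ℝ) ≤ (b - a) * (b^2 + a^2)),
        mul_nonneg hh (mul_nonneg (sub_nonneg.2 hlt.le) (mul_nonneg hb ha))]
    have h2 : b^3 ≤ 4*a^3 + 4*h^3 := by
      have := pow_le_pow_left₀ hb hba 3
      nlinarith [mul_nonneg (sq_nonneg (a-h)) (by positivity : (0:ℝ) ≤ a + h)]
    nlinarith [mul_le_mul_of_nonneg_right h2 hh]

lemma aux_half2 (a b h : ℝ) (ha : 0 ≤ a) (hb : 0 ≤ b) (hh : 0 ≤ h)
    (hab : a - b ≤ h) : a^4 - b^4 ≤ 4*(a^3*h) := by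
  rcases le_or_gt a b with hle | hlt
  · nlinarith [pow_le_pow_left₀ ha hle 4, mul_nonneg (mul_nonneg (mul_nonneg ha ha) ha) hh]
  · have hba : b ≤ a := hlt.le
    nlinarith [mul_le_mul_of_nonneg_right hab (by nlinarith : (0:ℝ) ≤ a^3 + a^2*b + a*b^2 + b^3),
      mul_nonneg hh (by nlinarith : (0:ℝ) ≤ (a - b) * (a^2 + b^2)),
      mul_nonneg hh (mul_nonneg (sub_nonneg.2 hba) (mul_nonneg ha hb))]

lemma aux_poly (a b h : ℝ) (ha : 0 ≤ a) (hb : 0 ≤ b) (hh : 0 ≤ h)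
    (hab : |a - b| ≤ h) : |a^4 - b^4| ≤ 16*(a^3*h) + 16*h^4 := by
  rw [abs_le] at hab
  rw [abs_le]
  refine ⟨by nlinarith [aux_half a b h ha hb hh (by linarith) (by linarith)], ?_⟩
  have := aux_half2 a b h ha hb hh (by linarith)
  nlinarith [mul_nonneg (mul_nonneg (mul_nonneg ha ha) ha) hh, pow_nonneg hh 4]

set_option maxHeartbeats 1000000 in
lemma stmt16_key (d n : ℕ) (Ω : Type) (mΩ : MeasurableSpace Ω) (P : Measure Ω)
    [IsProbabilityMeasure P] (X : Fin n → Ω → EuclideanSpace ℝ (Fin d))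
    (hn : 0 < n) (hXm : ∀ i, Measurable (X i))
    (hXind : iIndepFun X P)
    (K : ℝ) (hK1 : 1 ≤ K)
    (a : Fin n → Ω → ℝ) (hadef : a = fun i ω => ‖X i ω‖)
    (hIntPow : ∀ (i : Fin n) (k : ℕ), k ≤ 4 → Integrable (fun ω => a i ω ^ k) P)
    (hIntPowBd : ∀ (i : Fin n) (k : ℕ), k ≤ 4 → ∫ ω, a i ω ^ k ∂P ≤ K)
    (hinner_int : ∀ i j : Fin n, Integrable (fun ω => ⟪X i ω, X j ω⟫) P)
    (hod : ∀ i j : Fin n, i ≠ j → ∫ ω, ⟪X i ω, X j ω⟫ ∂P = 0)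
    (i : Fin n) :
    Integrable (fun ω => a i ω^3 * ((n:ℝ)⁻¹ * ‖∑ j, X j ω‖)) P ∧
      ∫ ω, a i ω^3 * ((n:ℝ)⁻¹ * ‖∑ j, X j ω‖) ∂P ≤ 2*K^2/Real.sqrt n := by
  classical
  have hn0 : (0:ℝ) < n := by exact_mod_cast hn
  have hsq0 : (0:ℝ) < Real.sqrt n := Real.sqrt_pos.2 hn0
  have hK0 : (0:ℝ) < K := lt_of_lt_of_le one_pos hK1
  set s : Finset (Fin n) := Finset.univ.erase i with hsdef
  set T : Ω → EuclideanSpace ℝ (Fin d) := fun ω => ∑ j ∈ s, X j ω with hTdef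
  have hTm : Measurable T := by
    apply Finset.measurable_sum
    exact fun j _ => hXm j
  have hTindep : IndepFun T (X i) P := by
    have := hXind.indepFun_finsetSum_of_notMem hXm (Finset.notMem_erase i Finset.univ)
    have he : (∑ j ∈ s, X j) = T := by
      funext ω; simp [hTdef, Finset.sum_apply]
    rwa [he] at this
  -- second moment of T
  have hTsq : ∀ ω, ‖T ω‖^2 = ∑ j ∈ s, ∑ k ∈ s, ⟪X j ω, X k ω⟫ := by
    intro ω
    rw [← real_inner_self_eq_norm_sq, hTdef]
    rw [sum_inner]
    exact Finset.sum_congr rfl fun j _ => by rw [inner_sum]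
  have hT2int : Integrable (fun ω => ‖T ω‖^2) P := by
    have : Integrable (fun ω => ∑ j ∈ s, ∑ k ∈ s, ⟪X j ω, X k ω⟫) P :=
      integrable_finset_sum _ fun j _ => integrable_finset_sum _ fun k _ => hinner_int j k
    exact this.congr (by filter_upwards with ω using (hTsq ω).symm)
  have hT2bd : ∫ ω, ‖T ω‖^2 ∂P ≤ n * K := by
    have h1 : ∫ ω, ‖T ω‖^2 ∂P = ∑ j ∈ s, ∑ k ∈ s, ∫ ω, ⟪X j ω, X k ω⟫ ∂P := by
      simp_rw [hTsq]
      rw [integral_finset_sum _ fun j _ => integrable_finset_sum _ fun k _ => hinner_int j k]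
      exact Finset.sum_congr rfl fun j _ => integral_finset_sum _ fun k _ => hinner_int j k
    rw [h1]
    have h2 : ∀ j ∈ s, ∑ k ∈ s, ∫ ω, ⟪X j ω, X k ω⟫ ∂P ≤ K := by
      intro j hj
      rw [Finset.sum_eq_single_of_mem j hj (fun k _ hkj => hod j k (Ne.symm hkj))]
      have : ∀ ω, ⟪X j ω, X j ω⟫ = a j ω ^ 2 := by
        intro ω; rw [real_inner_self_eq_norm_sq, hadef]
      simp_rw [this]
      exact hIntPowBd j 2 (by norm_num)
    calc ∑ j ∈ s, ∑ k ∈ s, ∫ ω, ⟪X j ω, X k ω⟫ ∂P ≤ ∑ j ∈ s, K := Finset.sum_le_sum h2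
      _ = s.card * K := by rw [Finset.sum_const, nsmul_eq_mul]
      _ ≤ n * K := by
          have : (s.card : ℝ) ≤ n := by
            have := Finset.card_le_univ s
            simp only [Finset.card_univ, Fintype.card_fin] at this
            exact_mod_cast this
          exact mul_le_mul_of_nonneg_right this hK0.le
  -- first moment of ‖T‖
  have hT1int : Integrable (fun ω => ‖T ω‖) P := by
    have hsum : Integrable (fun ω => ∑ j ∈ s, a j ω) P := by
      refine integrable_finset_sum s (fun j _ => ?_)
      have := hIntPow j 1 (by norm_num)
      simpa using this
    refine hsum.mono' hTm.norm.aestronglyMeasurable ?_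
    filter_upwards with ω
    rw [Real.norm_eq_abs, abs_of_nonneg (norm_nonneg _)]
    calc ‖T ω‖ ≤ ∑ j ∈ s, ‖X j ω‖ := norm_sum_le _ _
      _ = ∑ j ∈ s, a j ω := by simp [hadef]
  have hT1bd : ∫ ω, ‖T ω‖ ∂P ≤ Real.sqrt n * K := by
    have hpt : ∀ ω, ‖T ω‖ ≤ Real.sqrt n / 2 + ‖T ω‖^2 / (2 * Real.sqrt n) := by
      intro ω
      have hs2 : Real.sqrt n * Real.sqrt n = n := Real.mul_self_sqrt hn0.le
      have h1 : ‖T ω‖ ≤ Real.sqrt n / 2 + ‖T ω‖^2 / (2 * Real.sqrt n) ↔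
          ‖T ω‖ * (2 * Real.sqrt n) ≤ (Real.sqrt n / 2 + ‖T ω‖^2 / (2 * Real.sqrt n)) * (2 * Real.sqrt n) :=
        (mul_le_mul_iff_of_pos_right (by positivity)).symm
      rw [h1]
      have h2 : (Real.sqrt n / 2 + ‖T ω‖^2 / (2 * Real.sqrt n)) * (2 * Real.sqrt n)
          = Real.sqrt n * Real.sqrt n + ‖T ω‖^2 := by
        field_simp
      rw [h2, hs2]
      nlinarith [sq_nonneg (‖T ω‖ - Real.sqrt n), hs2]
    calc ∫ ω, ‖T ω‖ ∂P ≤ ∫ ω, (Real.sqrt n / 2 + ‖T ω‖^2 / (2 * Real.sqrt n)) ∂P :=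
          integral_mono hT1int ((integrable_const _).add (hT2int.div_const _)) hpt
      _ = Real.sqrt n / 2 + (∫ ω, ‖T ω‖^2 ∂P) / (2 * Real.sqrt n) := by
          rw [integral_add (integrable_const _) (hT2int.div_const _), integral_const,
            integral_div]
          simp
      _ ≤ Real.sqrt n / 2 + (n * K) / (2 * Real.sqrt n) := by gcongr
      _ = Real.sqrt n / 2 + Real.sqrt n * K / 2 := by
          have hs2 : Real.sqrt n * Real.sqrt n = n := Real.mul_self_sqrt hn0.le
          rw [← hs2]
          field_simp
          rw [Real.sqrt_sq hsq0.le]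
          nlinarith [Real.mul_self_sqrt hn0.le, Real.sq_sqrt hn0.le]
      _ ≤ Real.sqrt n * K := by nlinarith [hsq0]
  have hsqlen : Real.sqrt n ≤ n := by
    have h1 : (1:ℝ) ≤ n := by exact_mod_cast hn
    have := Real.sqrt_le_sqrt (by nlinarith : (n:ℝ) ≤ (n:ℝ)^2)
    rwa [Real.sqrt_sq hn0.le] at this
  have hindep3 : IndepFun (fun ω => a i ω ^ 3) (fun ω => ‖T ω‖) P := by
    have := hTindep.symm.comp (φ := fun x : EuclideanSpace ℝ (Fin d) => ‖x‖^3)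
      (ψ := fun x : EuclideanSpace ℝ (Fin d) => ‖x‖) (measurable_norm.pow_const 3) measurable_norm
    simpa [hadef, Function.comp_def] using this
  have hprod_int : Integrable (fun ω => a i ω^3 * ‖T ω‖) P :=
    hindep3.integrable_mul (hIntPow i 3 (by norm_num)) hT1int
  have hprod_bd : ∫ ω, a i ω^3 * ‖T ω‖ ∂P ≤ K * (Real.sqrt n * K) := by
    have heq := hindep3.integral_fun_mul_eq_mul_integral (hIntPow i 3 (by norm_num)).aestronglyMeasurable
      hT1int.aestronglyMeasurable
    rw [heq]
    have h4 : (0:ℝ) ≤ ∫ ω, ‖T ω‖ ∂P := integral_nonneg fun ω => norm_nonneg _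
    exact mul_le_mul (hIntPowBd i 3 (by norm_num)) hT1bd h4 hK0.le
  have hpt : ∀ ω, a i ω^3 * ((n:ℝ)⁻¹ * ‖∑ j, X j ω‖)
      ≤ (n:ℝ)⁻¹ * a i ω^4 + (n:ℝ)⁻¹ * (a i ω^3 * ‖T ω‖) := by
    intro ω
    have hS : ∑ j, X j ω = X i ω + T ω := by
      simp only [hTdef, hsdef]
      exact (Finset.add_sum_erase Finset.univ (fun j => X j ω) (Finset.mem_univ i)).symm
    have hSn : ‖∑ j, X j ω‖ ≤ a i ω + ‖T ω‖ := by
      rw [hS, hadef]; exact norm_add_le _ _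
    have h0 : (0:ℝ) ≤ a i ω ^ 3 := by simp only [hadef]; positivity
    have h1 : (0:ℝ) ≤ (n:ℝ)⁻¹ := by positivity
    calc a i ω^3 * ((n:ℝ)⁻¹ * ‖∑ j, X j ω‖) ≤ a i ω^3 * ((n:ℝ)⁻¹ * (a i ω + ‖T ω‖)) :=
          mul_le_mul_of_nonneg_left (mul_le_mul_of_nonneg_left hSn h1) h0
      _ = (n:ℝ)⁻¹ * a i ω^4 + (n:ℝ)⁻¹ * (a i ω^3 * ‖T ω‖) := by ring
  have hgint : Integrable (fun ω => (n:ℝ)⁻¹ * a i ω^4 + (n:ℝ)⁻¹ * (a i ω^3 * ‖T ω‖)) P :=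
    ((hIntPow i 4 le_rfl).const_mul _).add (hprod_int.const_mul _)
  have hfm : Measurable (fun ω => a i ω^3 * ((n:ℝ)⁻¹ * ‖∑ j, X j ω‖)) := by
    have hSm : Measurable (fun ω => ∑ j, X j ω) :=
      Finset.measurable_sum Finset.univ (fun j _ => hXm j)
    have : Measurable (a i) := by rw [hadef]; exact (hXm i).norm
    exact (this.pow_const 3).mul (measurable_const.mul hSm.norm)
  have hfint : Integrable (fun ω => a i ω^3 * ((n:ℝ)⁻¹ * ‖∑ j, X j ω‖)) P := by
    refine hgint.mono' hfm.aestronglyMeasurable ?_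
    filter_upwards with ω
    rw [Real.norm_eq_abs, abs_of_nonneg (by simp only [hadef]; positivity)]
    exact hpt ω
  refine ⟨hfint, ?_⟩
  have hs2 : Real.sqrt n * Real.sqrt n = (n:ℝ) := Real.mul_self_sqrt hn0.le
  calc ∫ ω, a i ω^3 * ((n:ℝ)⁻¹ * ‖∑ j, X j ω‖) ∂P
      ≤ ∫ ω, ((n:ℝ)⁻¹ * a i ω^4 + (n:ℝ)⁻¹ * (a i ω^3 * ‖T ω‖)) ∂P :=
        integral_mono hfint hgint hpt
    _ = (n:ℝ)⁻¹ * ∫ ω, a i ω^4 ∂P + (n:ℝ)⁻¹ * ∫ ω, a i ω^3 * ‖T ω‖ ∂P := by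
        rw [integral_add ((hIntPow i 4 le_rfl).const_mul _) (hprod_int.const_mul _),
          integral_const_mul, integral_const_mul]
    _ ≤ (n:ℝ)⁻¹ * K + (n:ℝ)⁻¹ * (K * (Real.sqrt n * K)) := by
        have h5 : (0:ℝ) ≤ (n:ℝ)⁻¹ := by positivity
        have := hIntPowBd i 4 le_rfl
        gcongr
    _ ≤ 2*K^2/Real.sqrt n := by
        have h1 : (n:ℝ)⁻¹ * (K * (Real.sqrt n * K)) = K^2/Real.sqrt n := by
          rw [← hs2]
          field_simp
          rw [Real.sqrt_sq hsq0.le]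
        have h2 : (n:ℝ)⁻¹ * K ≤ K^2/Real.sqrt n := by
          rw [inv_mul_eq_div, div_le_div_iff₀ hn0 hsq0]
          have hKK : K ≤ K^2 := by nlinarith
          calc K * Real.sqrt n ≤ K^2 * Real.sqrt n := by nlinarith [hsq0.le]
            _ ≤ K^2 * n := by nlinarith [hsqlen, sq_nonneg K]
        rw [h1]
        have : 2*K^2/Real.sqrt n = K^2/Real.sqrt n + K^2/Real.sqrt n := by ring
        rw [this]
        linarith

set_option maxHeartbeats 1000000 in
lemma stmt16_final (d n : ℕ) (Ω : Type) (mΩ : MeasurableSpace Ω) (P : Measure Ω)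
    [IsProbabilityMeasure P] (X : Fin n → Ω → EuclideanSpace ℝ (Fin d))
    (hn : 0 < n) (hXm : ∀ i, Measurable (X i))
    (K : ℝ) (hK1 : 1 ≤ K)
    (key : ∀ i : Fin n, Integrable (fun ω => ‖X i ω‖^3 * ((n:ℝ)⁻¹ * ‖∑ j, X j ω‖)) P ∧
      ∫ ω, ‖X i ω‖^3 * ((n:ℝ)⁻¹ * ‖∑ j, X j ω‖) ∂P ≤ 2*K^2/Real.sqrt n) :
    ∫ ω, |((n : ℝ))⁻¹ * ∑ i, ‖X i ω‖ ^ 4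
        - ((n : ℝ))⁻¹ * ∑ i, ‖X i ω - ((n : ℝ))⁻¹ • ∑ j, X j ω‖ ^ 4| ∂P
      ≤ 64 * K^2 * (n : ℝ) ^ (-(1/2) : ℝ) := by
  classical
  have hn0 : (0:ℝ) < n := by exact_mod_cast hn
  have hsq0 : (0:ℝ) < Real.sqrt n := Real.sqrt_pos.2 hn0
  have hK0 : (0:ℝ) < K := lt_of_lt_of_le one_pos hK1
  set g : Ω → ℝ := fun ω => 32 * ((n:ℝ)⁻¹ * ∑ i, ‖X i ω‖^3 * ((n:ℝ)⁻¹ * ‖∑ j, X j ω‖))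
    with hgdef
  have hgint : Integrable g P := by
    exact (((integrable_finset_sum Finset.univ (fun i _ => (key i).1)).const_mul _).const_mul _)
  have hptw : ∀ ω, |((n : ℝ))⁻¹ * ∑ i, ‖X i ω‖ ^ 4
      - ((n : ℝ))⁻¹ * ∑ i, ‖X i ω - ((n : ℝ))⁻¹ • ∑ j, X j ω‖ ^ 4| ≤ g ω := by
    intro ω
    set h : ℝ := (n:ℝ)⁻¹ * ‖∑ j, X j ω‖ with hhdef
    have hh0 : 0 ≤ h := by positivity
    have habs : ∀ i : Fin n, |‖X i ω‖ - ‖X i ω - ((n : ℝ))⁻¹ • ∑ j, X j ω‖| ≤ h := by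
      intro i
      have h1 := abs_norm_sub_norm_le (X i ω) (X i ω - ((n : ℝ))⁻¹ • ∑ j, X j ω)
      have h2 : X i ω - (X i ω - ((n : ℝ))⁻¹ • ∑ j, X j ω) = ((n : ℝ))⁻¹ • ∑ j, X j ω := by
        abel
      rw [h2, norm_smul, Real.norm_eq_abs, abs_of_nonneg (by positivity : (0:ℝ) ≤ (n:ℝ)⁻¹)] at h1
      exact h1
    have hterm : ∀ i : Fin n, |‖X i ω‖^4 - ‖X i ω - ((n : ℝ))⁻¹ • ∑ j, X j ω‖^4|
        ≤ 16*(‖X i ω‖^3*h) + 16*h^4 := fun i =>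
      aux_poly _ _ _ (norm_nonneg _) (norm_nonneg _) hh0 (habs i)
    have hh4 : h^4 ≤ (n:ℝ)⁻¹ * ∑ j, ‖X j ω‖^3 * h := by
      have hhle : h ≤ (n:ℝ)⁻¹ * ∑ j, ‖X j ω‖ := by
        rw [hhdef]
        exact mul_le_mul_of_nonneg_left (norm_sum_le _ _) (by positivity)
      have hcube : (∑ j, ‖X j ω‖)^3 / (n:ℝ)^2 ≤ ∑ j, ‖X j ω‖^3 := by
        have := pow_sum_div_card_le_sum_pow (f := fun j => ‖X j ω‖)
          (s := Finset.univ) (fun j _ => norm_nonneg _) 2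
        simpa using this
      have h3 : h^3 ≤ (n:ℝ)⁻¹ * ∑ j, ‖X j ω‖^3 := by
        calc h^3 ≤ ((n:ℝ)⁻¹ * ∑ j, ‖X j ω‖)^3 := by
              apply pow_le_pow_left₀ hh0 hhle
          _ = ((∑ j, ‖X j ω‖)^3 / (n:ℝ)^2) / n := by
              rw [mul_pow, div_div, inv_pow, inv_mul_eq_div]
              norm_num [pow_succ]
          _ ≤ (∑ j, ‖X j ω‖^3) / n := by
              gcongr
          _ = (n:ℝ)⁻¹ * ∑ j, ‖X j ω‖^3 := by rw [div_eq_inv_mul]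
      calc h^4 = h^3 * h := by ring
        _ ≤ ((n:ℝ)⁻¹ * ∑ j, ‖X j ω‖^3) * h := mul_le_mul_of_nonneg_right h3 hh0
        _ = (n:ℝ)⁻¹ * ∑ j, ‖X j ω‖^3 * h := by rw [mul_assoc, Finset.sum_mul]
    calc |((n : ℝ))⁻¹ * ∑ i, ‖X i ω‖ ^ 4
          - ((n : ℝ))⁻¹ * ∑ i, ‖X i ω - ((n : ℝ))⁻¹ • ∑ j, X j ω‖ ^ 4|
        = (n:ℝ)⁻¹ * |∑ i, (‖X i ω‖ ^ 4 - ‖X i ω - ((n : ℝ))⁻¹ • ∑ j, X j ω‖ ^ 4)| := by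
          rw [← mul_sub, abs_mul, abs_of_nonneg (by positivity : (0:ℝ) ≤ (n:ℝ)⁻¹),
            Finset.sum_sub_distrib]
      _ ≤ (n:ℝ)⁻¹ * ∑ i, |‖X i ω‖ ^ 4 - ‖X i ω - ((n : ℝ))⁻¹ • ∑ j, X j ω‖ ^ 4| := by
          apply mul_le_mul_of_nonneg_left (Finset.abs_sum_le_sum_abs _ _) (by positivity)
      _ ≤ (n:ℝ)⁻¹ * ∑ i, (16*(‖X i ω‖^3*h) + 16*h^4) := by
          apply mul_le_mul_of_nonneg_left (Finset.sum_le_sum fun i _ => hterm i) (by positivity)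
      _ = 16 * ((n:ℝ)⁻¹ * ∑ i, ‖X i ω‖^3*h) + 16*h^4 := by
          rw [Finset.sum_add_distrib, Finset.sum_const, ← Finset.mul_sum]
          simp only [Finset.card_univ, Fintype.card_fin, nsmul_eq_mul]
          field_simp
          ring
          congr 1; exact Finset.sum_congr rfl fun i _ => mul_comm _ _
      _ ≤ 16 * ((n:ℝ)⁻¹ * ∑ i, ‖X i ω‖^3*h) + 16*((n:ℝ)⁻¹ * ∑ j, ‖X j ω‖^3 * h) := by
          linarith [hh4]
      _ = g ω := by rw [hgdef]; ring
  have hstep : ∫ ω, |((n : ℝ))⁻¹ * ∑ i, ‖X i ω‖ ^ 4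
      - ((n : ℝ))⁻¹ * ∑ i, ‖X i ω - ((n : ℝ))⁻¹ • ∑ j, X j ω‖ ^ 4| ∂P ≤ ∫ ω, g ω ∂P := by
    refine integral_mono_of_nonneg ?_ hgint ?_
    · filter_upwards with ω; positivity
    · filter_upwards with ω; exact hptw ω
  refine hstep.trans ?_
  have hgval : ∫ ω, g ω ∂P
      = 32 * ((n:ℝ)⁻¹ * ∑ i, ∫ ω, ‖X i ω‖^3 * ((n:ℝ)⁻¹ * ‖∑ j, X j ω‖) ∂P) := by
    rw [hgdef]
    rw [integral_const_mul, integral_const_mul,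
      integral_finset_sum _ (fun i _ => (key i).1)]
  rw [hgval]
  have hsum : ∑ i : Fin n, ∫ ω, ‖X i ω‖^3 * ((n:ℝ)⁻¹ * ‖∑ j, X j ω‖) ∂P
      ≤ n * (2*K^2/Real.sqrt n) := by
    calc ∑ i : Fin n, ∫ ω, ‖X i ω‖^3 * ((n:ℝ)⁻¹ * ‖∑ j, X j ω‖) ∂P
        ≤ ∑ _i : Fin n, 2*K^2/Real.sqrt n := Finset.sum_le_sum fun i _ => (key i).2
      _ = n * (2*K^2/Real.sqrt n) := by
          rw [Finset.sum_const, Finset.card_univ, Fintype.card_fin, nsmul_eq_mul]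
  have hrpow : (n : ℝ) ^ (-(1/2) : ℝ) = (Real.sqrt n)⁻¹ := by
    rw [Real.rpow_neg hn0.le, Real.sqrt_eq_rpow]
  rw [hrpow]
  calc 32 * ((n:ℝ)⁻¹ * ∑ i, ∫ ω, ‖X i ω‖^3 * ((n:ℝ)⁻¹ * ‖∑ j, X j ω‖) ∂P)
      ≤ 32 * ((n:ℝ)⁻¹ * (n * (2*K^2/Real.sqrt n))) := by
        have hnn : (0:ℝ) ≤ (n:ℝ)⁻¹ := by positivity
        gcongr
      _ = 64 * K^2 * (Real.sqrt n)⁻¹ := by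
        field_simp
        ring

set_option maxHeartbeats 1000000 in
/-- For i.i.d. mean-zero random vectors `X_1, …, X_n` in `ℝ^d` with `E‖X_1‖⁴ ≤ M`,
`E| n⁻¹ Σ_i ‖X_i‖⁴ - n⁻¹ Σ_i ‖X_i - X̄_n‖⁴ | ≤ C n^{-1/2}` with `C` depending only
on the fourth moment bound `M`. -/
theorem stmt_16 :
    ∀ M : ℝ, ∃ C : ℝ, ∀ (d n : ℕ) (Ω : Type) (_ : MeasurableSpace Ω) (P : Measure Ω),
      IsProbabilityMeasure P →
      ∀ X : Fin n → Ω → EuclideanSpace ℝ (Fin d),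
        0 < n →
        (∀ i, Measurable (X i)) →
        iIndepFun X P →
        (∀ i j, Measure.map (X i) P = Measure.map (X j) P) →
        (∀ i, ∫ ω, X i ω ∂P = 0) →
        (∀ i, Integrable (fun ω => ‖X i ω‖ ^ 4) P) →
        (∀ i, ∫ ω, ‖X i ω‖ ^ 4 ∂P ≤ M) →
        ∫ ω, |((n : ℝ))⁻¹ * ∑ i, ‖X i ω‖ ^ 4
            - ((n : ℝ))⁻¹ * ∑ i, ‖X i ω - ((n : ℝ))⁻¹ • ∑ j, X j ω‖ ^ 4| ∂P
          ≤ C * (n : ℝ) ^ (-(1/2) : ℝ) := by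
  classical
  intro M
  refine ⟨64 * (M + 1)^2, ?_⟩
  intro d n Ω mΩ P hP X hn hXm hXind hXid hXmean hXint hXbd
  haveI := hP
  have hn0 : (0:ℝ) < n := by exact_mod_cast hn
  have hsq0 : (0:ℝ) < Real.sqrt n := Real.sqrt_pos.2 hn0
  have hM0 : 0 ≤ M :=
    le_trans (integral_nonneg fun ω => by positivity) (hXbd ⟨0, hn⟩)
  set K : ℝ := M + 1 with hKdef
  have hK1 : 1 ≤ K := by simp [hKdef]; linarith
  have hK0 : 0 < K := lt_of_lt_of_le one_pos hK1
  set a : Fin n → Ω → ℝ := fun i ω => ‖X i ω‖ with hadef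
  have ha0 : ∀ i ω, 0 ≤ a i ω := fun i ω => norm_nonneg _
  have ham : ∀ i, Measurable (a i) := fun i => (hXm i).norm
  have h1a : ∀ (i : Fin n) (ω : Ω) (k : ℕ), k ≤ 4 → a i ω ^ k ≤ 1 + a i ω ^ 4 := by
    intro i ω k hk
    rcases le_or_gt (a i ω) 1 with h|h
    · have : a i ω ^ k ≤ 1 := pow_le_one₀ (ha0 i ω) h
      have : (0:ℝ) ≤ a i ω ^ 4 := by positivity
      linarith [pow_le_one₀ (ha0 i ω) h (n := k)]
    · have : a i ω ^ k ≤ a i ω ^ 4 := pow_le_pow_right₀ h.le hk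
      linarith
  have hIntPow : ∀ (i : Fin n) (k : ℕ), k ≤ 4 → Integrable (fun ω => a i ω ^ k) P := by
    intro i k hk
    refine ((integrable_const (1:ℝ)).add (hXint i)).mono'
      ((ham i).pow_const k).aestronglyMeasurable ?_
    filter_upwards with ω
    rw [Real.norm_eq_abs, abs_of_nonneg (by positivity)]
    exact h1a i ω k hk
  have hIntPowBd : ∀ (i : Fin n) (k : ℕ), k ≤ 4 → ∫ ω, a i ω ^ k ∂P ≤ K := by
    intro i k hk
    calc ∫ ω, a i ω ^ k ∂P ≤ ∫ ω, (1 + a i ω ^ 4) ∂P :=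
          integral_mono (hIntPow i k hk) ((integrable_const _).add (hXint i))
            (fun ω => h1a i ω k hk)
      _ = 1 + ∫ ω, a i ω ^ 4 ∂P := by
          rw [integral_add (integrable_const _) (hXint i)]; simp; rfl
      _ ≤ K := by have := hXbd i; simp [hKdef]; linarith
  have hIntX : ∀ i, Integrable (X i) P := by
    intro i
    refine ((integrable_const (1:ℝ)).add (hXint i)).mono' (hXm i).aestronglyMeasurable ?_
    filter_upwards with ω
    simpa using h1a i ω 1 (by norm_num)
  -- coordinates
  have hIntC : ∀ (i : Fin n) (c : Fin d), Integrable (fun ω => X i ω c) P := fun i c =>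
    (EuclideanSpace.proj c (𝕜 := ℝ)).integrable_comp (hIntX i)
  have hEC : ∀ (i : Fin n) (c : Fin d), ∫ ω, X i ω c ∂P = 0 := by
    intro i c
    have h := (EuclideanSpace.proj c (𝕜 := ℝ)).integral_comp_comm (hIntX i)
    rw [hXmean i] at h
    simpa using h
  -- off-diagonal inner products integrate to zero
  have hinner_int : ∀ i j : Fin n, Integrable (fun ω => ⟪X i ω, X j ω⟫) P := by
    intro i j
    refine ((hIntPow i 2 (by norm_num)).add (hIntPow j 2 (by norm_num))).mono'
      ((hXm i).inner (hXm j)).aestronglyMeasurable ?_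
    filter_upwards with ω
    rw [Real.norm_eq_abs]
    have h1 := abs_real_inner_le_norm (X i ω) (X j ω)
    have h2 : ‖X i ω‖ * ‖X j ω‖ ≤ a i ω ^ 2 + a j ω ^ 2 := by
      simp only [hadef]; nlinarith [sq_nonneg (‖X i ω‖ - ‖X j ω‖), norm_nonneg (X i ω),
        norm_nonneg (X j ω)]
    exact h1.trans h2
  have hod : ∀ i j : Fin n, i ≠ j → ∫ ω, ⟪X i ω, X j ω⟫ ∂P = 0 := by
    intro i j hij
    have hind := hXind.indepFun hij
    have hrw : ∀ ω, ⟪X i ω, X j ω⟫ = ∑ c, X i ω c * X j ω c := by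
      intro ω
      simp [PiLp.inner_apply, RCLike.inner_apply, conj_trivial]
      exact Finset.sum_congr rfl fun c _ => mul_comm _ _
    calc ∫ ω, ⟪X i ω, X j ω⟫ ∂P = ∫ ω, ∑ c, X i ω c * X j ω c ∂P := by
          simp_rw [hrw]
      _ = ∑ c, ∫ ω, X i ω c * X j ω c ∂P := by
          refine integral_finset_sum _ (fun c _ => ?_)
          have hindc : IndepFun (fun ω => X i ω c) (fun ω => X j ω c) P :=
            hind.comp (φ := fun x : EuclideanSpace ℝ (Fin d) => x c) (ψ := fun x : EuclideanSpace ℝ (Fin d) => x c) ((measurable_pi_apply c).comp (WithLp.measurable_ofLp 2 _)) ((measurable_pi_apply c).comp (WithLp.measurable_ofLp 2 _))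
          exact hindc.integrable_mul (hIntC i c) (hIntC j c)
      _ = 0 := by
          refine Finset.sum_eq_zero (fun c _ => ?_)
          have hindc : IndepFun (fun ω => X i ω c) (fun ω => X j ω c) P :=
            hind.comp (φ := fun x : EuclideanSpace ℝ (Fin d) => x c) (ψ := fun x : EuclideanSpace ℝ (Fin d) => x c) ((measurable_pi_apply c).comp (WithLp.measurable_ofLp 2 _)) ((measurable_pi_apply c).comp (WithLp.measurable_ofLp 2 _))
          rw [hindc.integral_fun_mul_eq_mul_integral (hIntC i c).aestronglyMeasurable
            (hIntC j c).aestronglyMeasurable, hEC i c, zero_mul]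
  have key : ∀ i : Fin n, Integrable (fun ω => ‖X i ω‖^3 * ((n:ℝ)⁻¹ * ‖∑ j, X j ω‖)) P ∧
      ∫ ω, ‖X i ω‖^3 * ((n:ℝ)⁻¹ * ‖∑ j, X j ω‖) ∂P ≤ 2*K^2/Real.sqrt n := by
    intro i
    have := stmt16_key d n Ω mΩ P X hn hXm hXind K hK1 a hadef hIntPow hIntPowBd
      hinner_int hod i
    simpa [hadef] using this
  exact stmt16_final d n Ω mΩ P X hn hXm K hK1 key
end

section
/- Let g ∈ ℝ^ℓ with Σ_j g_j = 0 be an optimizer of the semidual problem T(μ', ν') = sup_g { g^⊤ ν' + ∫ min_j (c(x, y_j) - g_j) dμ'(x) } for a cost c bounded by |c(x,y_j)| ≤ C for all x in the support of μ' and all j, and assume ν'_j ≥ ν̲ > 0 for all j. Then max_j g_j - min_j g_j ≤ (1/ν̲)( max_j ∫ c(x,y_j) dμ'(x) - T(μ',ν') ), and consequently |g_j| ≤ (1 - 1/ℓ)(1/ν̲)( max_j ∫ c(x,y_j) dμ'(x) - T(μ',ν') ) for every j. -/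
open MeasureTheory
open scoped BigOperators

lemma integrable_finset_inf' {α : Type*} [MeasurableSpace α] (μ : Measure α)
    {ι : Type*} (f : α → ι → ℝ) (s : Finset ι) (hs : s.Nonempty)
    (hf : ∀ j, Integrable (fun x => f x j) μ) :
    Integrable (fun x => s.inf' hs fun j => f x j) μ := by
  induction hs using Finset.Nonempty.cons_induction with
  | singleton a => simpa only [Finset.inf'_singleton] using hf a
  | cons a s h hs ih =>
    simp only [Finset.inf'_cons (H := hs)]
    exact (hf a).inf ih

/-- Semidiscrete OT: if `g` (normalized by `Σ_j g_j = 0`) maximizes the semidual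
objective `g ↦ gᵀν' + ∫ min_j (c(x,y_j) - g_j) dμ'`, the cost is bounded on the
support of `μ'` and `ν'_j ≥ ν̲ > 0`, then
`max_j g_j - min_j g_j ≤ (1/ν̲)(max_j ∫ c(x,y_j) dμ' - T(μ',ν'))` and
`|g_j| ≤ (1 - 1/ℓ)(1/ν̲)(max_j ∫ c(x,y_j) dμ' - T(μ',ν'))` for every `j`,
where `T(μ',ν')` is the optimal semidual value. -/
theorem stmt_18 {dx ℓ : ℕ} (hℓ : 0 < ℓ)
    (μ' : Measure (EuclideanSpace ℝ (Fin dx))) [IsProbabilityMeasure μ']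
    (c : EuclideanSpace ℝ (Fin dx) → Fin ℓ → ℝ) (C : ℝ)
    (hC : ∀ᵐ x ∂μ', ∀ j, |c x j| ≤ C)
    (ν' : Fin ℓ → ℝ) (νlb : ℝ) (hνlb : 0 < νlb) (hν : ∀ j, νlb ≤ ν' j)
    (hν1 : ∑ j, ν' j = 1)
    (hint : ∀ j, Integrable (fun x => c x j) μ')
    (g : Fin ℓ → ℝ) (hg0 : ∑ j, g j = 0)
    (hopt : ∀ h : Fin ℓ → ℝ,
      (∑ j, h j * ν' j) + ∫ x, ⨅ j, (c x j - h j) ∂μ'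
        ≤ (∑ j, g j * ν' j) + ∫ x, ⨅ j, (c x j - g j) ∂μ') :
    ((⨆ j, g j) - (⨅ j, g j)
        ≤ (1/νlb) * ((⨆ j, ∫ x, c x j ∂μ')
            - ((∑ j, g j * ν' j) + ∫ x, ⨅ j, (c x j - g j) ∂μ'))) ∧
      ∀ j, |g j| ≤ (1 - 1/(ℓ : ℝ)) * (1/νlb) * ((⨆ j, ∫ x, c x j ∂μ')
            - ((∑ j, g j * ν' j) + ∫ x, ⨅ j, (c x j - g j) ∂μ')) := by
  haveI : Nonempty (Fin ℓ) := Fin.pos_iff_nonempty.mp hℓ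
  obtain ⟨jM, hjM⟩ := Finite.exists_max g
  obtain ⟨jm, hjm⟩ := Finite.exists_min g
  have hsupg : (⨆ j, g j) = g jM :=
    le_antisymm (ciSup_le hjM) (le_ciSup (Set.Finite.bddAbove (Set.finite_range g)) jM)
  have hinfg : (⨅ j, g j) = g jm :=
    le_antisymm (ciInf_le (Set.Finite.bddBelow (Set.finite_range g)) jm) (le_ciInf hjm)
  -- integrability of the infimum
  have hIntInf : Integrable (fun x => ⨅ j, (c x j - g j)) μ' := by
    have := integrable_finset_inf' μ' (fun x j => c x j - g j) Finset.univ
      Finset.univ_nonempty (fun j => (hint j).sub (integrable_const _))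
    simpa [Finset.inf'_univ_eq_ciInf] using this
  -- Step A: ∫ inf ≤ ∫ c_{jM} - g jM
  have hA : (∫ x, ⨅ j, (c x j - g j) ∂μ') ≤ (∫ x, c x jM ∂μ') - g jM := by
    have h1 : (∫ x, ⨅ j, (c x j - g j) ∂μ') ≤ ∫ x, (c x jM - g jM) ∂μ' := by
      refine integral_mono hIntInf ((hint jM).sub (integrable_const _)) fun x => ?_
      exact ciInf_le (Set.Finite.bddBelow (Set.finite_range _)) jM
    have h2 : (∫ x, (c x jM - g jM) ∂μ') = (∫ x, c x jM ∂μ') - g jM := by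
      rw [integral_sub (hint jM) (integrable_const _)]
      simp
    linarith
  have hS : (∫ x, c x jM ∂μ') ≤ ⨆ j, ∫ x, c x j ∂μ' :=
    le_ciSup (f := fun j => ∫ x, c x j ∂μ') (Set.Finite.bddAbove (Set.finite_range _)) jM
  -- Step B: g jM - ∑ g_j ν'_j ≥ νlb * (g jM - g jm)
  have hB : νlb * (g jM - g jm) ≤ g jM - ∑ j, g j * ν' j := by
    have hrw : ∑ j, (g jM - g j) * ν' j = g jM - ∑ j, g j * ν' j := by
      simp only [sub_mul, Finset.sum_sub_distrib, ← Finset.mul_sum, hν1, mul_one]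
    have hsingle : (g jM - g jm) * ν' jm ≤ ∑ j, (g jM - g j) * ν' j := by
      refine Finset.single_le_sum (f := fun j => (g jM - g j) * ν' j)
        (fun j _ => ?_) (Finset.mem_univ jm)
      exact mul_nonneg (by linarith [hjM j]) (le_trans hνlb.le (hν j))
    have h2 : νlb * (g jM - g jm) ≤ (g jM - g jm) * ν' jm := by
      have hMm' : 0 ≤ g jM - g jm := by linarith [hjM jm]
      nlinarith [mul_nonneg hMm' (sub_nonneg.mpr (hν jm))]
    linarith
  set T := (∑ j, g j * ν' j) + ∫ x, ⨅ j, (c x j - g j) ∂μ' with hT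
  set S := (⨆ j, ∫ x, c x j ∂μ') with hSdef
  have hkey : νlb * (g jM - g jm) ≤ S - T := by
    have hTle : T ≤ (∑ j, g j * ν' j) + S - g jM := by rw [hT]; linarith
    linarith
  have hMm : 0 ≤ g jM - g jm := by linarith [hjM jm]
  have hpart1' : g jM - g jm ≤ (1/νlb) * (S - T) := by
    rw [one_div, inv_mul_eq_div, le_div_iff₀ hνlb]
    linarith [mul_comm νlb (g jM - g jm)]
  have hpart1 : (⨆ j, g j) - (⨅ j, g j) ≤ (1/νlb) * (S - T) := by
    rw [hsupg, hinfg]; exact hpart1'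
  refine ⟨hpart1, fun j => ?_⟩
  -- Part 2
  have hST : 0 ≤ S - T := le_trans (mul_nonneg hνlb.le hMm) hkey
  have hcard : (Finset.univ.erase j).card = ℓ - 1 := by
    simp [Finset.card_erase_of_mem]
  have hkey2 : ∀ f : Fin ℓ → ℝ, (∀ k, f k ≤ g jM - g jm) → f j = 0 →
      ∑ k, f k ≤ ((ℓ : ℝ) - 1) * (g jM - g jm) := by
    intro f hf hfj
    have h1 : ∑ k, f k = ∑ k ∈ Finset.univ.erase j, f k := by
      rw [← Finset.sum_erase_add _ _ (Finset.mem_univ j), hfj, add_zero]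
    have hb := Finset.sum_le_card_nsmul (Finset.univ.erase j) f (g jM - g jm)
      fun k _ => hf k
    rw [nsmul_eq_mul] at hb
    have hcast : ((Finset.univ.erase j).card : ℝ) = (ℓ : ℝ) - 1 := by
      rw [hcard, Nat.cast_sub hℓ, Nat.cast_one]
    rw [h1]
    rw [hcast] at hb
    exact hb
  have hsum : (ℓ : ℝ) * g j = ∑ k, (g j - g k) := by
    rw [Finset.sum_sub_distrib, hg0, Finset.sum_const, Finset.card_univ]
    simp [nsmul_eq_mul]
  have hub : (ℓ : ℝ) * g j ≤ ((ℓ : ℝ) - 1) * (g jM - g jm) := by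
    rw [hsum]
    exact hkey2 _ (fun k => by have := hjM j; have := hjm k; linarith) (by ring)
  have hlb : (ℓ : ℝ) * (-g j) ≤ ((ℓ : ℝ) - 1) * (g jM - g jm) := by
    have hsum' : (ℓ : ℝ) * (-g j) = ∑ k, (g k - g j) := by
      rw [Finset.sum_sub_distrib, hg0, Finset.sum_const, Finset.card_univ]
      simp [nsmul_eq_mul]
    rw [hsum']
    exact hkey2 _ (fun k => by have := hjM k; have := hjm j; linarith) (by ring)
  have hℓpos : (0 : ℝ) < (ℓ : ℝ) := by exact_mod_cast hℓ
  have heq : (1 - 1/(ℓ : ℝ)) * (g jM - g jm) * (ℓ : ℝ)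
      = ((ℓ : ℝ) - 1) * (g jM - g jm) := by
    field_simp
  have habs : |g j| ≤ (1 - 1/(ℓ : ℝ)) * (g jM - g jm) := by
    rw [abs_le]
    constructor <;> nlinarith [hub, hlb, heq, hℓpos]
  have h1ℓ : 0 ≤ 1 - 1/(ℓ : ℝ) := by
    have h : 1/(ℓ : ℝ) ≤ 1 := by
      rw [div_le_one hℓpos]
      exact_mod_cast hℓ
    linarith
  calc |g j| ≤ (1 - 1/(ℓ : ℝ)) * (g jM - g jm) := habs
    _ ≤ (1 - 1/(ℓ : ℝ)) * ((1/νlb) * (S - T)) :=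
        mul_le_mul_of_nonneg_left hpart1' h1ℓ
    _ = (1 - 1/(ℓ : ℝ)) * (1/νlb) * (S - T) := by ring
end
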